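/- arXiv:1812.05989 — 7 statements merged into one kernel-verified Lean document; each statement's English description precedes it below -/
import Mathlib

section
/- Let n and d be positive integers with d < n and d = 2t even. If F is a collection of binary vectors in {0,1}^n such that the Hamming distance between any two vectors of F is at most d, then |F| ≤ C(n,0) + C(n,1) + ... + C(n,t). -/
open Finset
open scoped symmDiff

namespace Klei

/-- partial sums of binomial coefficients: `P k m = ∑_{i<k} C(m,i)` -/
def P (k m : ℕ) : ℕ := ∑ i ∈ Finset.range k, m.choose i

lemma P_succ (k m : ℕ) : P (k+1) m = P k m + m.choose k := Finset.sum_range_succ _ _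

lemma P_pascal (k m : ℕ) : P (k+1) (m+1) = P (k+1) m + P k m := by
  induction k with
  | zero => simp [P]
  | succ k ih =>
    have h1 : P (k+1+1) (m+1) = P (k+1) (m+1) + (m+1).choose (k+1) := P_succ _ _
    have h2 : (m+1).choose (k+1) = m.choose k + m.choose (k+1) := Nat.choose_succ_succ m k
    have h3 : P (k+1+1) m = P (k+1) m + m.choose (k+1) := P_succ _ _
    have h4 : P (k+1) m = P k m + m.choose k := P_succ _ _
    omega

lemma P_mono {k k' : ℕ} (m : ℕ) (h : k ≤ k') : P k m ≤ P k' m := by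
  unfold P
  exact Finset.sum_le_sum_of_subset (Finset.range_subset_range.2 h)

lemma P_strict {k m : ℕ} (h : k ≤ m) : P k m < P (k+1) m := by
  rw [P_succ]
  have : 0 < m.choose k := Nat.choose_pos h
  omega

lemma P_top (m : ℕ) : P (m+1) m = 2 ^ m := Nat.sum_range_choose m

lemma P_flip {a b m : ℕ} (h : a + b + 1 = m) : P (a+1) m + P (b+1) m = 2 ^ m := by
  have h1 : P (b+1) m = ∑ i ∈ Finset.Ico (a+1) (m+1), m.choose i := by
    unfold P
    apply Finset.sum_nbij' (fun i => m - i) (fun i => m - i)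
    · intro i hi
      simp only [Finset.mem_range] at hi
      simp only [Finset.mem_Ico]
      omega
    · intro i hi
      simp only [Finset.mem_Ico] at hi
      simp only [Finset.mem_range]
      omega
    · intro i hi
      simp only [Finset.mem_range] at hi
      omega
    · intro i hi
      simp only [Finset.mem_Ico] at hi
      omega
    · intro i hi
      simp only [Finset.mem_range] at hi
      rw [Nat.choose_symm (by omega)]
  rw [h1, ← P_top m]
  unfold P
  rw [Finset.sum_range_add_sum_Ico _ (by omega : a + 1 ≤ m + 1)]


variable {α : Type*} [DecidableEq α]

/-- a family of subsets of `U` all of size `< k` has at most `P k |U|` members. -/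
lemma card_le_P {V : Finset (Finset α)} {U : Finset α} {k : ℕ}
    (hVU : ∀ t ∈ V, t ⊆ U) (hk : ∀ t ∈ V, t.card < k) :
    V.card ≤ P k U.card := by
  have hsub : V ⊆ (Finset.range k).biUnion (fun i => U.powersetCard i) := by
    intro t ht
    exact Finset.mem_biUnion.2 ⟨t.card, Finset.mem_range.2 (hk t ht),
      Finset.mem_powersetCard.2 ⟨hVU t ht, rfl⟩⟩
  calc V.card ≤ _ := Finset.card_le_card hsub
    _ ≤ ∑ i ∈ Finset.range k, (U.powersetCard i).card := Finset.card_biUnion_le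
    _ = P k U.card := by
        unfold P
        exact Finset.sum_congr rfl fun i _ => Finset.card_powersetCard i U

/-- every member of an erase-closed nonempty family contains `∅`. -/
lemma empty_mem_of {A : Finset (Finset α)} (hA : ∀ s ∈ A, ∀ e, s.erase e ∈ A)
    {s : Finset α} (hs : s ∈ A) : (∅ : Finset α) ∈ A := by
  induction s using Finset.strongInductionOn with
  | _ s ih =>
    rcases s.eq_empty_or_nonempty with rfl | ⟨e, he⟩
    · exact hs
    · exact ih (s.erase e) (Finset.erase_ssubset he) (hA s hs e)

/-- the "closed upper neighborhood" of `B` inside the ground set `U`. -/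
def gam (U : Finset α) (B : Finset (Finset α)) : Finset (Finset α) :=
  U.powerset.filter (fun t => t ∈ B ∨ ∃ y ∈ t, t.erase y ∈ B)

lemma mem_gam {U : Finset α} {B : Finset (Finset α)} {t : Finset α} :
    t ∈ gam U B ↔ t ⊆ U ∧ (t ∈ B ∨ ∃ y ∈ t, t.erase y ∈ B) := by
  simp [gam]


variable [LinearOrder α]

section Sections

variable {U : Finset α} {B : Finset (Finset α)} {M : α}

lemma sec0_subset (hBU : ∀ s ∈ B, s ⊆ U) :
    ∀ s ∈ B.nonMemberSubfamily M, s ⊆ U.erase M := by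
  intro s hs
  rw [mem_nonMemberSubfamily] at hs
  exact subset_erase.2 ⟨hBU s hs.1, hs.2⟩

lemma sec1_subset (hBU : ∀ s ∈ B, s ⊆ U) :
    ∀ s ∈ B.memberSubfamily M, s ⊆ U.erase M := by
  intro s hs
  rw [mem_memberSubfamily] at hs
  exact subset_erase.2 ⟨(subset_insert M s).trans (hBU _ hs.1), hs.2⟩

lemma sec0_erase (hBer : ∀ s ∈ B, ∀ e, s.erase e ∈ B) :
    ∀ s ∈ B.nonMemberSubfamily M, ∀ e, s.erase e ∈ B.nonMemberSubfamily M := by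
  intro s hs e
  rw [mem_nonMemberSubfamily] at hs ⊢
  exact ⟨hBer s hs.1 e, fun h => hs.2 (mem_of_mem_erase h)⟩

lemma sec1_erase (hBer : ∀ s ∈ B, ∀ e, s.erase e ∈ B) :
    ∀ s ∈ B.memberSubfamily M, ∀ e, s.erase e ∈ B.memberSubfamily M := by
  intro s hs e
  rw [mem_memberSubfamily] at hs ⊢
  refine ⟨?_, fun h => hs.2 (mem_of_mem_erase h)⟩
  by_cases heM : e = M
  · subst heM
    rw [erase_eq_of_notMem hs.2]
    exact hs.1
  · have h2 := hBer _ hs.1 e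
    rwa [erase_insert_of_ne (fun h => heM h.symm)] at h2

lemma sec0_shift
    (hBsh : ∀ s ∈ B, ∀ x ∈ U, ∀ y : α, x < y → y ∈ s → x ∉ s → insert x (s.erase y) ∈ B) :
    ∀ s ∈ B.nonMemberSubfamily M, ∀ x ∈ U.erase M, ∀ y : α, x < y → y ∈ s → x ∉ s →
      insert x (s.erase y) ∈ B.nonMemberSubfamily M := by
  intro s hs x hxU' y hxy hys hxs
  rw [mem_nonMemberSubfamily] at hs ⊢
  refine ⟨hBsh s hs.1 x (mem_of_mem_erase hxU') y hxy hys hxs, ?_⟩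
  intro h
  rcases mem_insert.1 h with rfl | h
  · exact (ne_of_mem_erase hxU') rfl
  · exact hs.2 (mem_of_mem_erase h)

lemma sec1_shift
    (hBsh : ∀ s ∈ B, ∀ x ∈ U, ∀ y : α, x < y → y ∈ s → x ∉ s → insert x (s.erase y) ∈ B) :
    ∀ s ∈ B.memberSubfamily M, ∀ x ∈ U.erase M, ∀ y : α, x < y → y ∈ s → x ∉ s →
      insert x (s.erase y) ∈ B.memberSubfamily M := by
  intro s hs x hxU' y hxy hys hxs
  rw [mem_memberSubfamily] at hs ⊢
  have hyM : y ≠ M := fun h => hs.2 (h ▸ hys)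
  have hxM : x ≠ M := ne_of_mem_erase hxU'
  constructor
  · have := hBsh _ hs.1 x (mem_of_mem_erase hxU') y hxy (mem_insert_of_mem hys)
      (fun h => (mem_insert.1 h).elim hxM hxs)
    rwa [erase_insert_of_ne (fun h => hyM h.symm), Finset.insert_comm] at this
  · intro h
    rcases mem_insert.1 h with rfl | h
    · exact hxM rfl
    · exact hs.2 (mem_of_mem_erase h)

lemma sec10 (hBer : ∀ s ∈ B, ∀ e, s.erase e ∈ B) :
    B.memberSubfamily M ⊆ B.nonMemberSubfamily M := by
  intro s hs
  rw [mem_memberSubfamily] at hs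
  rw [mem_nonMemberSubfamily]
  refine ⟨?_, hs.2⟩
  have := hBer _ hs.1 M
  rwa [erase_insert hs.2] at this

lemma gam_sec1 (hMU : M ∈ U) (hMmax : ∀ y ∈ U, y ≤ M)
    (hBer : ∀ s ∈ B, ∀ e, s.erase e ∈ B)
    (hBsh : ∀ s ∈ B, ∀ x ∈ U, ∀ y : α, x < y → y ∈ s → x ∉ s → insert x (s.erase y) ∈ B) :
    gam (U.erase M) (B.memberSubfamily M) ⊆ B.nonMemberSubfamily M := by
  intro t ht
  rw [mem_gam] at ht
  obtain ⟨htU', h2⟩ := ht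
  have hMt : M ∉ t := (subset_erase.1 htU').2
  rcases h2 with h2 | ⟨y, hyt, hty⟩
  · exact sec10 hBer h2
  · rw [mem_memberSubfamily] at hty
    have hyU' : y ∈ U.erase M := htU' hyt
    have hyU : y ∈ U := mem_of_mem_erase hyU'
    have hyM : y < M := lt_of_le_of_ne (hMmax y hyU) (ne_of_mem_erase hyU')
    have hMte : M ∉ t.erase y := fun h => hMt (mem_of_mem_erase h)
    have := hBsh _ hty.1 y hyU M hyM (mem_insert_self M _)
      (fun h => (mem_insert.1 h).elim (fun h' => (ne_of_mem_erase hyU') h')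
        (fun h' => (notMem_erase y t) h'))
    rw [erase_insert hMte, insert_erase hyt] at this
    exact mem_nonMemberSubfamily.2 ⟨this, hMt⟩

end Sections

/-- Expansion lemma: a shifted, erase-closed family `B` of subsets of `U` with
`|B| ≥ P a |U|` has `|Γ B| ≥ P (a+1) |U|`. -/
theorem expansion : ∀ N : ℕ, ∀ U : Finset α, U.card = N → ∀ (B : Finset (Finset α)) (a : ℕ),
    1 ≤ a → a ≤ N →
    (∀ s ∈ B, s ⊆ U) →
    (∀ s ∈ B, ∀ e, s.erase e ∈ B) →
    (∀ s ∈ B, ∀ x ∈ U, ∀ y : α, x < y → y ∈ s → x ∉ s → insert x (s.erase y) ∈ B) →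
    P a N ≤ B.card →
    P (a+1) N ≤ (gam U B).card := by
  intro N
  induction N using Nat.strong_induction_on with
  | _ N IH =>
  intro U hU B a ha1 haN hBU hBer hBsh hcard
  rcases eq_or_lt_of_le haN with rfl | haN'
  -- boundary case a = N
  · have hBsubP : B ⊆ U.powerset := fun s hs => mem_powerset.2 (hBU s hs)
    have hPN : P a a + 1 = 2 ^ a := by
      have h1 := P_top a
      have h2 := P_succ a a
      rw [Nat.choose_self] at h2
      omega
    have hmiss : (U.powerset \ B).card + 1 ≤ 2 := by
      have h3 := card_sdiff_of_subset hBsubP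
      have h4 : U.powerset.card = 2 ^ a := by rw [card_powerset, hU]
      have h5 : B.card ≤ U.powerset.card := card_le_card hBsubP
      omega
    have hpow : U.powerset ⊆ gam U B := by
      intro t ht
      rw [mem_powerset] at ht
      rw [mem_gam]
      refine ⟨ht, ?_⟩
      by_cases htB : t ∈ B
      · exact Or.inl htB
      right
      by_cases htU : t = U
      · have htne : t.Nonempty := by
          rw [← card_pos, htU, hU]; omega
        obtain ⟨y, hy⟩ := htne
        refine ⟨y, hy, ?_⟩
        by_contra hery
        have h1 : t ∈ U.powerset \ B := mem_sdiff.2 ⟨mem_powerset.2 ht, htB⟩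
        have h2 : t.erase y ∈ U.powerset \ B :=
          mem_sdiff.2 ⟨mem_powerset.2 ((erase_subset _ _).trans ht), hery⟩
        have hne : t.erase y ≠ t := (erase_ssubset hy).ne
        have hsub2 : ({t, t.erase y} : Finset (Finset α)) ⊆ U.powerset \ B := by
          intro z hz
          rcases mem_insert.1 hz with rfl | hz
          · exact h1
          · rwa [mem_singleton.1 hz]
        have := card_le_card hsub2
        rw [card_pair (Ne.symm hne)] at this
        omega
      · exfalso
        have hssub : t ⊂ U := ssubset_of_subset_of_ne ht htU
        obtain ⟨y, hyU, hyt⟩ := exists_of_ssubset hssub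
        by_cases hinsB : insert y t ∈ B
        · have := hBer _ hinsB y
          rw [erase_insert hyt] at this
          exact htB this
        · have h1 : t ∈ U.powerset \ B := mem_sdiff.2 ⟨mem_powerset.2 ht, htB⟩
          have h2 : insert y t ∈ U.powerset \ B :=
            mem_sdiff.2 ⟨mem_powerset.2 (insert_subset hyU ht), hinsB⟩
          have hne : t ≠ insert y t := by
            intro h
            exact hyt (h ▸ mem_insert_self y t)
          have hsub2 : ({t, insert y t} : Finset (Finset α)) ⊆ U.powerset \ B := by
            intro z hz
            rcases mem_insert.1 hz with rfl | hz
            · exact h1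
            · rwa [mem_singleton.1 hz]
          have := card_le_card hsub2
          rw [card_pair hne] at this
          omega
    have hcard2 := card_le_card hpow
    rw [card_powerset, hU] at hcard2
    have := P_top a
    omega
  -- main case a < N
  · obtain ⟨m, rfl⟩ : ∃ m, N = m + 1 := ⟨N - 1, by omega⟩
    have hUne : U.Nonempty := by rw [← card_pos, hU]; omega
    set M := U.max' hUne with hM
    have hMU : M ∈ U := U.max'_mem hUne
    set U' := U.erase M with hU'
    have hU'card : U'.card = m := by
      rw [hU', card_erase_of_mem hMU, hU]
      omega
    set B0 := B.nonMemberSubfamily M with hB0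
    set B1 := B.memberSubfamily M with hB1
    have hB01card : B1.card + B0.card = B.card :=
      card_memberSubfamily_add_card_nonMemberSubfamily M B
    have hB0U : ∀ s ∈ B0, s ⊆ U' := sec0_subset hBU
    have hB1U : ∀ s ∈ B1, s ⊆ U' := sec1_subset hBU
    have hB0er : ∀ s ∈ B0, ∀ e, s.erase e ∈ B0 := sec0_erase hBer
    have hB1er : ∀ s ∈ B1, ∀ e, s.erase e ∈ B1 := sec1_erase hBer
    have hB0sh : ∀ s ∈ B0, ∀ x ∈ U', ∀ y : α, x < y → y ∈ s → x ∉ s →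
        insert x (s.erase y) ∈ B0 := sec0_shift hBsh
    have hB1sh : ∀ s ∈ B1, ∀ x ∈ U', ∀ y : α, x < y → y ∈ s → x ∉ s →
        insert x (s.erase y) ∈ B1 := sec1_shift hBsh
    have hB10 : B1 ⊆ B0 := sec10 hBer
    have hgam3 : gam U' B1 ⊆ B0 := gam_sec1 hMU (fun y hy => U.le_max' y hy) hBer hBsh
    have hgam2 : (gam U' B0).card + B0.card ≤ (gam U B).card := by
      have hXsub : gam U' B0 ⊆ gam U B := by
        intro t ht
        rw [mem_gam] at ht ⊢
        refine ⟨ht.1.trans (erase_subset M U), ?_⟩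
        rcases ht.2 with h | ⟨y, hyt, hty⟩
        · exact Or.inl ((mem_nonMemberSubfamily.1 h).1)
        · exact Or.inr ⟨y, hyt, (mem_nonMemberSubfamily.1 hty).1⟩
      have hYsub : B0.image (insert M) ⊆ gam U B := by
        intro t ht
        obtain ⟨s, hs, rfl⟩ := mem_image.1 ht
        rw [mem_nonMemberSubfamily] at hs
        rw [mem_gam]
        refine ⟨insert_subset hMU (hBU s hs.1), Or.inr ⟨M, mem_insert_self M s, ?_⟩⟩
        rw [erase_insert hs.2]
        exact hs.1
      have hdisj : Disjoint (gam U' B0) (B0.image (insert M)) := by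
        rw [disjoint_left]
        intro t ht ht'
        rw [mem_gam] at ht
        obtain ⟨s, hs, rfl⟩ := mem_image.1 ht'
        exact (subset_erase.1 ht.1).2 (mem_insert_self M s)
      have hinj : Set.InjOn (insert M) (B0 : Set (Finset α)) := by
        intro s hs s' hs' h
        have h1 : M ∉ s := (mem_nonMemberSubfamily.1 hs).2
        have h2 : M ∉ s' := (mem_nonMemberSubfamily.1 hs').2
        rw [← erase_insert h1, ← erase_insert h2, h]
      calc (gam U' B0).card + B0.card
          = (gam U' B0 ∪ B0.image (insert M)).card := by
            rw [card_union_of_disjoint hdisj, card_image_of_injOn hinj]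
        _ ≤ (gam U B).card := card_le_card (union_subset hXsub hYsub)
    obtain ⟨a', rfl⟩ : ∃ a', a = a' + 1 := ⟨a - 1, by omega⟩
    have hPsplit : P (a'+1) (m+1) = P (a'+1) m + P a' m := P_pascal a' m
    rcases le_or_gt (P (a'+1) m) B0.card with h0 | h0
    · have hG0 := IH m (by omega) U' hU'card B0 (a'+1) (by omega) (by omega)
        hB0U hB0er hB0sh h0
      have hgoal : P (a'+1+1) (m+1) = P (a'+1+1) m + P (a'+1) m := P_pascal (a'+1) m
      omega
    · have h1 : P a' m + 1 ≤ B1.card := by omega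
      rcases Nat.eq_zero_or_pos a' with rfl | ha'
      · have hle : B1.card ≤ B0.card := card_le_card hB10
        have hP1 : P (0+1) m = 1 := by simp [P]
        have hP0 : P 0 m = 0 := by simp [P]
        omega
      · obtain ⟨a'', rfl⟩ : ∃ t, a' = t + 1 := ⟨a' - 1, by omega⟩
        have hG1 := IH m (by omega) U' hU'card B1 (a''+1) (by omega) (by omega)
          hB1U hB1er hB1sh (by omega)
        have := card_le_card hgam3
        omega


/-- The key two-family theorem. -/
theorem core : ∀ N : ℕ, ∀ U : Finset α, U.card = N → ∀ (c a b : ℕ), a + b = c → c < N →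
    ∀ (A V : Finset (Finset α)),
    (∀ s ∈ A, s ⊆ U) → (∀ t ∈ V, t ⊆ U) →
    (∀ s ∈ A, ∀ e, s.erase e ∈ A) → (∀ t ∈ V, ∀ e, t.erase e ∈ V) →
    (∀ s ∈ A, ∀ x ∈ U, ∀ y : α, x < y → y ∈ s → x ∉ s → insert x (s.erase y) ∈ A) →
    (∀ s ∈ A, ∀ t ∈ V, Disjoint s t → s.card + t.card ≤ c) →
    P (a+1) N ≤ A.card →
    V.card ≤ P (b+1) N := by
  intro N
  induction N using Nat.strong_induction_on with
  | _ N IH =>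
  intro U hU c a b hab hc A V hAU hVU hAer hVer hAsh hcond hcard
  rcases eq_or_lt_of_le (Nat.succ_le_of_lt hc) with hcN | hcN
  -- flip case : c + 1 = N
  · have hnotin : ∀ v ∈ V, U \ v ∉ A := by
      intro v hv hUvA
      have hd2 := hcond _ hUvA _ hv sdiff_disjoint
      have hcv : (U \ v).card = N - v.card := by rw [card_sdiff_of_subset (hVU v hv), hU]
      have hvle : v.card ≤ N := by rw [← hU]; exact card_le_card (hVU v hv)
      omega
    have hWcard : (V.image (fun v => U \ v)).card = V.card := by
      apply card_image_of_injOn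
      intro v hv v' hv' h
      have h1 : U \ (U \ v) = v := Finset.sdiff_sdiff_eq_self (hVU v hv)
      have h2 : U \ (U \ v') = v' := Finset.sdiff_sdiff_eq_self (hVU v' hv')
      simp only at h
      rw [← h1, ← h2, h]
    have hdisjAW : Disjoint A (V.image (fun v => U \ v)) := by
      rw [disjoint_right]
      intro w hw hwA
      obtain ⟨v, hv, rfl⟩ := mem_image.1 hw
      exact hnotin v hv hwA
    have hsub : A ∪ V.image (fun v => U \ v) ⊆ U.powerset := by
      apply union_subset
      · exact fun s hs => mem_powerset.2 (hAU s hs)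
      · intro w hw
        obtain ⟨v, hv, rfl⟩ := mem_image.1 hw
        exact mem_powerset.2 (sdiff_subset)
    have hcount : A.card + V.card ≤ 2 ^ N := by
      have h1 := card_le_card hsub
      rw [card_union_of_disjoint hdisjAW, hWcard, card_powerset, hU] at h1
      exact h1
    have hflip : P (a+1) N + P (b+1) N = 2 ^ N := P_flip (by omega)
    omega
  -- main case : c + 1 < N
  · by_contra hVbig
    rw [not_le] at hVbig
    obtain ⟨m, rfl⟩ : ∃ m, N = m + 1 := ⟨N - 1, by omega⟩
    have hUne : U.Nonempty := by rw [← card_pos, hU]; omega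
    set M := U.max' hUne with hM
    have hMU : M ∈ U := U.max'_mem hUne
    set U' := U.erase M with hU'
    have hU'card : U'.card = m := by
      rw [hU', card_erase_of_mem hMU, hU]
      omega
    set A0 := A.nonMemberSubfamily M with hA0
    set A1 := A.memberSubfamily M with hA1
    set V0 := V.nonMemberSubfamily M with hV0
    set V1 := V.memberSubfamily M with hV1
    have hA01card : A1.card + A0.card = A.card :=
      card_memberSubfamily_add_card_nonMemberSubfamily M A
    have hV01card : V1.card + V0.card = V.card :=
      card_memberSubfamily_add_card_nonMemberSubfamily M V
    have hA0U : ∀ s ∈ A0, s ⊆ U' := sec0_subset hAU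
    have hV0U : ∀ s ∈ V0, s ⊆ U' := sec0_subset hVU
    have hV1U : ∀ s ∈ V1, s ⊆ U' := sec1_subset hVU
    have hA0er : ∀ s ∈ A0, ∀ e, s.erase e ∈ A0 := sec0_erase hAer
    have hV0er : ∀ s ∈ V0, ∀ e, s.erase e ∈ V0 := sec0_erase hVer
    have hV1er : ∀ s ∈ V1, ∀ e, s.erase e ∈ V1 := sec1_erase hVer
    have hA0sh : ∀ s ∈ A0, ∀ x ∈ U', ∀ y : α, x < y → y ∈ s → x ∉ s →
        insert x (s.erase y) ∈ A0 := sec0_shift hAsh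
    have hA1U : ∀ s ∈ A1, s ⊆ U' := sec1_subset hAU
    have hA1er : ∀ s ∈ A1, ∀ e, s.erase e ∈ A1 := sec1_erase hAer
    have hA1sh : ∀ s ∈ A1, ∀ x ∈ U', ∀ y : α, x < y → y ∈ s → x ∉ s →
        insert x (s.erase y) ∈ A1 := sec1_shift hAsh
    have hA10 : A1 ⊆ A0 := sec10 hAer
    have hgamA : gam U' A1 ⊆ A0 := gam_sec1 hMU (fun y hy => U.le_max' y hy) hAer hAsh
    -- membership facts for conditions
    have hmemA0 : ∀ s ∈ A0, s ∈ A := fun s hs => (mem_nonMemberSubfamily.1 hs).1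
    have hmemV0 : ∀ t ∈ V0, t ∈ V := fun t ht => (mem_nonMemberSubfamily.1 ht).1
    have hmemV1 : ∀ t ∈ V1, insert M t ∈ V ∧ M ∉ t :=
      fun t ht => mem_memberSubfamily.1 ht
    -- conditions for section pairs
    have hcond00 : ∀ s ∈ A0, ∀ t ∈ V0, Disjoint s t → s.card + t.card ≤ c :=
      fun s hs t ht hd => hcond s (hmemA0 s hs) t (hmemV0 t ht) hd
    have hcond01 : ∀ s ∈ A0, ∀ t ∈ V1, Disjoint s t → s.card + t.card + 1 ≤ c := by
      intro s hs t ht hd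
      obtain ⟨hins, hMt⟩ := hmemV1 t ht
      have hMs : M ∉ s := (mem_nonMemberSubfamily.1 hs).2
      have hd2 : Disjoint s (insert M t) := by
        rw [disjoint_insert_right]
        exact ⟨hMs, hd⟩
      have := hcond s (hmemA0 s hs) _ hins hd2
      rw [card_insert_of_notMem hMt] at this
      omega
    -- A-side: A0 must be large
    have hA0big : P (a+1) m ≤ A0.card := by
      by_contra h0
      rw [not_le] at h0
      have hPsplit : P (a+1) (m+1) = P (a+1) m + P a m := P_pascal a m
      have h1 : P a m + 1 ≤ A1.card := by omega
      rcases Nat.eq_zero_or_pos a with rfl | ha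
      · have : A1.card ≤ A0.card := card_le_card hA10
        have hP1 : P (0+1) m = 1 := by simp [P]
        have hP0 : P 0 m = 0 := by simp [P]
        omega
      · have hexp := expansion m U' hU'card A1 a ha (by omega) hA1U hA1er hA1sh (by omega)
        have := card_le_card hgamA
        omega
    -- V-side
    have hVsplit : P (b+1) (m+1) = P (b+1) m + P b m := P_pascal b m
    rcases le_or_gt (P (b+1) m + 1) V0.card with h0 | h0
    · -- V0 is too big : IH with (c, a, b)
      have := IH m (by omega) U' hU'card c a b hab (by omega) A0 V0
        hA0U hV0U hA0er hV0er hA0sh hcond00 hA0big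
      omega
    · -- V1 is too big
      have h1 : P b m + 1 ≤ V1.card := by omega
      rcases Nat.eq_zero_or_pos b with rfl | hb
      · -- b = 0 : V1 nonempty, so ∅ ∈ V1, bounding A0
        have hP0 : P 0 m = 0 := by simp [P]
        have hV1ne : V1.Nonempty := by
          rw [← card_pos]
          omega
        obtain ⟨t, ht⟩ := hV1ne
        have hem : (∅ : Finset α) ∈ V1 := empty_mem_of hV1er ht
        have hsize : ∀ s ∈ A0, s.card < c := by
          intro s hs
          have := hcond01 s hs ∅ hem (disjoint_empty_right s)
          simp at this
          omega
        have hbound := card_le_P hA0U hsize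
        rw [hU'card] at hbound
        have hstrict : P c m < P (c+1) m := P_strict (by omega)
        have hac : a = c := by omega
        rw [hac] at hA0big
        omega
      · -- b ≥ 1 : IH with (c-1, a, b-1) on (A0, V1)
        obtain ⟨b', rfl⟩ : ∃ b', b = b' + 1 := ⟨b - 1, by omega⟩
        have hcond01' : ∀ s ∈ A0, ∀ t ∈ V1, Disjoint s t → s.card + t.card ≤ a + b' := by
          intro s hs t ht hd
          have := hcond01 s hs t ht hd
          omega
        have := IH m (by omega) U' hU'card (a + b') a b' rfl (by omega) A0 V1
          hA0U hV1U hA0er hV1er hA0sh hcond01' hA0big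
        omega


section Push

variable {f : Finset α → Finset α} {A : Finset (Finset α)} {d : ℕ}

/-- apply a compression step `f` to every member of the family, keeping sets whose image
is already present. -/
def push (f : Finset α → Finset α) (A : Finset (Finset α)) : Finset (Finset α) :=
  A.filter (fun s => f s ∈ A) ∪ (A.filter (fun s => f s ∉ A)).image f

lemma mem_push {t : Finset α} :
    t ∈ push f A ↔ (t ∈ A ∧ f t ∈ A) ∨ ∃ s ∈ A, f s ∉ A ∧ f s = t := by
  simp only [push, mem_union, mem_filter, mem_image]
  constructor
  · rintro (h | ⟨s, ⟨hs, hfs⟩, rfl⟩)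
    · exact Or.inl h
    · exact Or.inr ⟨s, hs, hfs, rfl⟩
  · rintro (h | ⟨s, hs, hfs, rfl⟩)
    · exact Or.inl h
    · exact Or.inr ⟨s, ⟨hs, hfs⟩, rfl⟩

lemma image_mem_push (hidem : ∀ s, f (f s) = f s) {s : Finset α} (hs : s ∈ A) :
    f s ∈ push f A := by
  rw [mem_push]
  by_cases hfs : f s ∈ A
  · exact Or.inl ⟨hfs, by rw [hidem]; exact hfs⟩
  · exact Or.inr ⟨s, hs, hfs, rfl⟩

lemma card_push
    (hinj : ∀ s ∈ A, ∀ t ∈ A, f s ∉ A → f t ∉ A → f s = f t → s = t) :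
    (push f A).card = A.card := by
  have hdisj : Disjoint (A.filter (fun s => f s ∈ A))
      ((A.filter (fun s => f s ∉ A)).image f) := by
    rw [disjoint_left]
    intro t ht ht'
    obtain ⟨s, hs, rfl⟩ := mem_image.1 ht'
    exact (mem_filter.1 hs).2 (mem_filter.1 ht).1
  rw [push, card_union_of_disjoint hdisj, card_image_of_injOn, 
    card_filter_add_card_filter_not]
  intro s hs t ht h
  rw [mem_coe, mem_filter] at hs ht
  exact hinj s hs.1 t ht.1 hs.2 ht.2 h

lemma push_eq_or_lt (w : Finset α → ℕ)
    (hinj : ∀ s ∈ A, ∀ t ∈ A, f s ∉ A → f t ∉ A → f s = f t → s = t)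
    (hdec : ∀ s ∈ A, f s ∉ A → w (f s) < w s) :
    push f A = A ∨ ∑ s ∈ push f A, w s < ∑ s ∈ A, w s := by
  by_cases hQ : A.filter (fun s => f s ∉ A) = ∅
  · left
    have hall : A.filter (fun s => f s ∈ A) = A := by
      apply filter_true_of_mem
      intro s hs
      by_contra h
      exact (eq_empty_iff_forall_notMem.1 hQ s) (mem_filter.2 ⟨hs, h⟩)
    rw [push, hQ, image_empty, union_empty, hall]
  · right
    have hdisj : Disjoint (A.filter (fun s => f s ∈ A))
        ((A.filter (fun s => f s ∉ A)).image f) := by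
      rw [disjoint_left]
      intro t ht ht'
      obtain ⟨s, hs, rfl⟩ := mem_image.1 ht'
      exact (mem_filter.1 hs).2 (mem_filter.1 ht).1
    rw [push, sum_union hdisj, sum_image]
    · have hlt : ∑ s ∈ A.filter (fun s => f s ∉ A), w (f s)
          < ∑ s ∈ A.filter (fun s => f s ∉ A), w s := by
        apply sum_lt_sum_of_nonempty (nonempty_iff_ne_empty.2 hQ)
        intro i hi
        exact hdec i (mem_filter.1 hi).1 (mem_filter.1 hi).2
      have hsplit := sum_filter_add_sum_filter_not A (fun s => f s ∈ A) w
      omega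
    · intro s hs t ht h
      rw [mem_coe, mem_filter] at hs ht
      exact hinj s hs.1 t ht.1 hs.2 ht.2 h

lemma diam_push
    (hd : ∀ s ∈ A, ∀ t ∈ A, (s ∆ t).card ≤ d)
    (hcase : ∀ s ∈ A, f s ∉ A → ∀ v ∈ A, f v ∈ A → ((f s) ∆ v).card ≤ d)
    (hcase2 : ∀ s ∈ A, f s ∉ A → ∀ t ∈ A, f t ∉ A → ((f s) ∆ (f t)).card ≤ d) :
    ∀ u ∈ push f A, ∀ v ∈ push f A, (u ∆ v).card ≤ d := by
  intro u hu v hv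
  rw [mem_push] at hu hv
  rcases hu with ⟨huA, hufA⟩ | ⟨s, hs, hfs, rfl⟩ <;>
    rcases hv with ⟨hvA, hvfA⟩ | ⟨t, ht, hft, rfl⟩
  · exact hd u huA v hvA
  · rw [symmDiff_comm]
    exact hcase t ht hft u huA hufA
  · exact hcase s hs hfs v hvA hvfA
  · exact hcase2 s hs hfs t ht hft

end Push

section SymmDiffFacts

variable {s t v : Finset α} {e x y : α}

lemma sd_erase_erase (hes : e ∈ s) (het : e ∈ t) :
    (s.erase e) ∆ (t.erase e) = s ∆ t := by
  ext z
  simp only [mem_symmDiff, mem_erase]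
  by_cases hz : z = e
  · subst hz; simp [hes, het]
  · simp [hz]

lemma sd_erase_mem (hes : e ∈ s) (hev : e ∈ v) :
    (s.erase e) ∆ v = s ∆ (v.erase e) := by
  ext z
  simp only [mem_symmDiff, mem_erase]
  by_cases hz : z = e
  · subst hz; simp [hes, hev]
  · simp [hz]

lemma sd_erase_notmem (hes : e ∈ s) (hev : e ∉ v) :
    (s.erase e) ∆ v = (s ∆ v).erase e := by
  ext z
  simp only [mem_symmDiff, mem_erase]
  by_cases hz : z = e
  · subst hz
    simp [hes, hev]
  · simp [hz]

end SymmDiffFacts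


section Shf

variable {s t v : Finset α} {x y : α}

/-- the (x,y)-shift of a single set -/
def shf (x y : α) (s : Finset α) : Finset α :=
  if y ∈ s ∧ x ∉ s then insert x (s.erase y) else s

lemma shf_idem (hxy : x ≠ y) (s : Finset α) : shf x y (shf x y s) = shf x y s := by
  unfold shf
  by_cases h : y ∈ s ∧ x ∉ s
  · rw [if_pos h, if_neg]
    rintro ⟨-, hx⟩
    exact hx (mem_insert_self x _)
  · rw [if_neg h, if_neg h]

lemma sd_shift_a (hxy : x ≠ y) (hys : y ∈ s) (hxs : x ∉ s) (hxv : x ∈ v) (hyv : y ∈ v) :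
    (insert x (s.erase y)) ∆ v = insert y ((s ∆ v).erase x) := by
  ext z
  simp only [mem_symmDiff, mem_insert, mem_erase]
  by_cases hzx : z = x
  · subst hzx
    simp [hxs, hxv, hxy]
  · by_cases hzy : z = y
    · subst hzy
      simp [hys, hyv, hzx]
    · simp [hzx, hzy]

lemma sd_shift_b (hxy : x ≠ y) (hys : y ∈ s) (hxs : x ∉ s) (hxv : x ∉ v) (hyv : y ∉ v) :
    (insert x (s.erase y)) ∆ v = insert x ((s ∆ v).erase y) := by
  ext z
  simp only [mem_symmDiff, mem_insert, mem_erase]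
  by_cases hzx : z = x
  · subst hzx
    simp [hxs, hxv, hxy]
  · by_cases hzy : z = y
    · subst hzy
      simp [hys, hyv, hzx]
    · simp [hzx, hzy]

lemma sd_shift_c (hxy : x ≠ y) (hys : y ∈ s) (hxs : x ∉ s) (hxv : x ∈ v) (hyv : y ∉ v) :
    (insert x (s.erase y)) ∆ v = ((s ∆ v).erase x).erase y := by
  ext z
  simp only [mem_symmDiff, mem_insert, mem_erase]
  by_cases hzx : z = x
  · subst hzx
    simp [hxs, hxv, hxy]
  · by_cases hzy : z = y
    · subst hzy
      simp [hys, hyv, hzx]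
    · simp [hzx, hzy]

lemma sd_shift_d (hxy : x ≠ y) (hys : y ∈ s) (hxs : x ∉ s) (hxv : x ∉ v) (hyv : y ∈ v) :
    (insert x (s.erase y)) ∆ v = s ∆ (insert x (v.erase y)) := by
  ext z
  simp only [mem_symmDiff, mem_insert, mem_erase]
  by_cases hzx : z = x
  · subst hzx
    simp [hxs, hxv, hxy]
  · by_cases hzy : z = y
    · subst hzy
      simp [hys, hyv, hzx]
    · simp [hzx, hzy]

lemma sd_shift_mm (hxy : x ≠ y) (hys : y ∈ s) (hxs : x ∉ s) (hyt : y ∈ t) (hxt : x ∉ t) :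
    (insert x (s.erase y)) ∆ (insert x (t.erase y)) = s ∆ t := by
  ext z
  simp only [mem_symmDiff, mem_insert, mem_erase]
  by_cases hzx : z = x
  · subst hzx
    simp [hxs, hxt, hxy]
  · by_cases hzy : z = y
    · subst hzy
      simp [hys, hyt, hzx]
    · simp [hzx, hzy]

end Shf

section Diams

variable {A : Finset (Finset α)} {d : ℕ} {e x y : α}

lemma diam_push_erase (hd : ∀ s ∈ A, ∀ t ∈ A, (s ∆ t).card ≤ d) :
    ∀ u ∈ push (fun s => s.erase e) A, ∀ v ∈ push (fun s => s.erase e) A,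
      (u ∆ v).card ≤ d := by
  apply diam_push hd
  · intro s hs hfs v hv hvfA
    have hes : e ∈ s := by
      by_contra h
      rw [erase_eq_of_notMem h] at hfs
      exact hfs hs
    by_cases hev : e ∈ v
    · rw [sd_erase_mem hes hev]
      exact hd s hs _ hvfA
    · rw [sd_erase_notmem hes hev]
      exact le_trans (card_erase_le) (hd s hs v hv)
  · intro s hs hfs t ht hft
    have hes : e ∈ s := by
      by_contra h
      rw [erase_eq_of_notMem h] at hfs
      exact hfs hs
    have het : e ∈ t := by
      by_contra h
      rw [erase_eq_of_notMem h] at hft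
      exact hft ht
    rw [sd_erase_erase hes het]
    exact hd s hs t ht

lemma moved_shf {s : Finset α} (hs : s ∈ A) (hfs : shf x y s ∉ A) :
    y ∈ s ∧ x ∉ s := by
  by_contra h
  rw [shf, if_neg h] at hfs
  exact hfs hs

lemma diam_push_shf (hxy : x ≠ y) (hd : ∀ s ∈ A, ∀ t ∈ A, (s ∆ t).card ≤ d) :
    ∀ u ∈ push (shf x y) A, ∀ v ∈ push (shf x y) A, (u ∆ v).card ≤ d := by
  apply diam_push hd
  · intro s hs hfs v hv hvfA
    obtain ⟨hys, hxs⟩ := moved_shf hs hfs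
    rw [shf, if_pos ⟨hys, hxs⟩]
    by_cases hxv : x ∈ v <;> by_cases hyv : y ∈ v
    · rw [sd_shift_a hxy hys hxs hxv hyv]
      have h1 : x ∈ s ∆ v := by
        simp only [mem_symmDiff]
        exact Or.inr ⟨hxv, hxs⟩
      have h2 : y ∉ (s ∆ v).erase x := by
        simp only [mem_symmDiff, mem_erase]
        rintro ⟨-, (⟨-, hc⟩ | ⟨-, hc⟩)⟩
        · exact hc hyv
        · exact hc hys
      rw [card_insert_of_notMem h2, card_erase_of_mem h1]
      have h3 := hd s hs v hv
      have hpos : 0 < (s ∆ v).card := card_pos.2 ⟨x, h1⟩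
      omega
    · rw [sd_shift_c hxy hys hxs hxv hyv]
      exact le_trans (card_erase_le) (le_trans (card_erase_le) (hd s hs v hv))
    · have hfv : insert x (v.erase y) ∈ A := by
        rw [shf, if_pos ⟨hyv, hxv⟩] at hvfA
        exact hvfA
      rw [sd_shift_d hxy hys hxs hxv hyv]
      exact hd s hs _ hfv
    · rw [sd_shift_b hxy hys hxs hxv hyv]
      have h1 : y ∈ s ∆ v := by
        simp only [mem_symmDiff]
        exact Or.inl ⟨hys, hyv⟩
      have h2 : x ∉ (s ∆ v).erase y := by
        simp only [mem_symmDiff, mem_erase]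
        rintro ⟨-, (⟨hc, -⟩ | ⟨hc, -⟩)⟩
        · exact hxs hc
        · exact hxv hc
      rw [card_insert_of_notMem h2, card_erase_of_mem h1]
      have h3 := hd s hs v hv
      have hpos : 0 < (s ∆ v).card := card_pos.2 ⟨y, h1⟩
      omega
  · intro s hs hfs t ht hft
    obtain ⟨hys, hxs⟩ := moved_shf hs hfs
    obtain ⟨hyt, hxt⟩ := moved_shf ht hft
    rw [shf, if_pos ⟨hys, hxs⟩, shf, if_pos ⟨hyt, hxt⟩, sd_shift_mm hxy hys hxs hyt hxt]
    exact hd s hs t ht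

lemma inj_erase : ∀ s ∈ A, ∀ t ∈ A, s.erase e ∉ A → t.erase e ∉ A →
    s.erase e = t.erase e → s = t := by
  intro s hs t ht hfs hft h
  have hes : e ∈ s := by
    by_contra hh
    rw [erase_eq_of_notMem hh] at hfs
    exact hfs hs
  have het : e ∈ t := by
    by_contra hh
    rw [erase_eq_of_notMem hh] at hft
    exact hft ht
  rw [← insert_erase hes, ← insert_erase het, h]

lemma inj_shf : ∀ s ∈ A, ∀ t ∈ A, shf x y s ∉ A → shf x y t ∉ A →
    shf x y s = shf x y t → s = t := by
  intro s hs t ht hfs hft h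
  obtain ⟨hys, hxs⟩ := moved_shf hs hfs
  obtain ⟨hyt, hxt⟩ := moved_shf ht hft
  rw [shf, if_pos ⟨hys, hxs⟩, shf, if_pos ⟨hyt, hxt⟩] at h
  have h2 : s.erase y = t.erase y := by
    have hxse : x ∉ s.erase y := fun hh => hxs (mem_of_mem_erase hh)
    have hxte : x ∉ t.erase y := fun hh => hxt (mem_of_mem_erase hh)
    rw [← erase_insert hxse, ← erase_insert hxte, h]
  rw [← insert_erase hys, ← insert_erase hyt, h2]

end Diams


section Exists

variable {n : ℕ}

/-- weight used for the termination of compressions. -/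
def wtf (s : Finset (Fin n)) : ℕ := ∑ e ∈ s, ((e : ℕ) + 1)

lemma wtf_erase {s : Finset (Fin n)} {e : Fin n} (he : e ∈ s) :
    wtf (s.erase e) < wtf s := by
  have h1 : wtf (s.erase e) + ((e : ℕ) + 1) = wtf s := by
    unfold wtf
    exact Finset.sum_erase_add s _ he
  omega

lemma wtf_shf {s : Finset (Fin n)} {x y : Fin n} (hxy : x < y) (hys : y ∈ s) (hxs : x ∉ s) :
    wtf (insert x (s.erase y)) < wtf s := by
  have hxse : x ∉ s.erase y := fun hh => hxs (mem_of_mem_erase hh)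
  have h1 : wtf (s.erase y) + ((y : ℕ) + 1) = wtf s := by
    unfold wtf
    exact Finset.sum_erase_add s _ hys
  have h2 : wtf (insert x (s.erase y)) = ((x : ℕ) + 1) + wtf (s.erase y) := by
    unfold wtf
    exact Finset.sum_insert hxse
  have h3 : (x : ℕ) < (y : ℕ) := hxy
  omega

lemma exists_good {d : ℕ} : ∀ K : ℕ, ∀ A : Finset (Finset (Fin n)),
    (∑ s ∈ A, wtf s) = K →
    (∀ s ∈ A, ∀ t ∈ A, (s ∆ t).card ≤ d) →
    ∃ B : Finset (Finset (Fin n)), B.card = A.card ∧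
      (∀ s ∈ B, ∀ t ∈ B, (s ∆ t).card ≤ d) ∧
      (∀ s ∈ B, ∀ e, s.erase e ∈ B) ∧
      (∀ s ∈ B, ∀ x y : Fin n, x < y → y ∈ s → x ∉ s → insert x (s.erase y) ∈ B) := by
  intro K
  induction K using Nat.strong_induction_on with
  | _ K IH =>
  intro A hK hd
  by_cases h1 : ∃ e : Fin n, push (fun s => s.erase e) A ≠ A
  · obtain ⟨e, he⟩ := h1
    have hdec : ∀ s ∈ A, s.erase e ∉ A → wtf (s.erase e) < wtf s := by
      intro s hs hfs
      apply wtf_erase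
      by_contra hh
      rw [erase_eq_of_notMem hh] at hfs
      exact hfs hs
    rcases push_eq_or_lt wtf inj_erase hdec with heq | hlt
    · exact absurd heq he
    · obtain ⟨B, hB1, hB2, hB3, hB4⟩ := IH (∑ s ∈ push (fun s => s.erase e) A, wtf s)
        (by omega) (push (fun s => s.erase e) A) rfl (diam_push_erase hd)
      exact ⟨B, by rw [hB1, card_push inj_erase], hB2, hB3, hB4⟩
  · by_cases h2 : ∃ p : Fin n × Fin n, p.1 < p.2 ∧ push (shf p.1 p.2) A ≠ A
    · obtain ⟨⟨x, y⟩, hxy, he⟩ := h2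
      have hdec : ∀ s ∈ A, shf x y s ∉ A → wtf (shf x y s) < wtf s := by
        intro s hs hfs
        obtain ⟨hys, hxs⟩ := moved_shf hs hfs
        rw [shf, if_pos ⟨hys, hxs⟩]
        exact wtf_shf hxy hys hxs
      rcases push_eq_or_lt wtf inj_shf hdec with heq | hlt
      · exact absurd heq he
      · obtain ⟨B, hB1, hB2, hB3, hB4⟩ := IH (∑ s ∈ push (shf x y) A, wtf s)
          (by omega) (push (shf x y) A) rfl (diam_push_shf (ne_of_lt hxy) hd)
        exact ⟨B, by rw [hB1, card_push inj_shf], hB2, hB3, hB4⟩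
    · push_neg at h1 h2
      refine ⟨A, rfl, hd, ?_, ?_⟩
      · intro s hs e
        have := image_mem_push (f := fun s => s.erase e) (fun u => erase_idem) hs
        rwa [h1 e] at this
      · intro s hs x y hxy hys hxs
        have := image_mem_push (shf_idem (ne_of_lt hxy)) hs
        rw [h2 ⟨x, y⟩ hxy] at this
        rwa [shf, if_pos ⟨hys, hxs⟩] at this

end Exists


section Translate

variable {n : ℕ}

/-- support of a boolean vector -/
def supp (x : Fin n → Bool) : Finset (Fin n) := Finset.univ.filter (fun i => x i = true)

lemma supp_injective : Function.Injective (supp (n := n)) := by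
  intro x y h
  funext i
  have := Finset.ext_iff.1 h i
  simp only [supp, mem_filter, mem_univ, true_and] at this
  cases hx : x i <;> cases hy : y i
  · rfl
  · rw [hx, hy] at this; simp at this
  · rw [hx, hy] at this; simp at this
  · rfl

lemma hamming_supp (x y : Fin n → Bool) :
    hammingDist x y = ((supp x) ∆ (supp y)).card := by
  have : (supp x) ∆ (supp y) = Finset.univ.filter (fun i => x i ≠ y i) := by
    ext i
    simp only [mem_symmDiff, supp, mem_filter, mem_univ, true_and]
    cases hx : x i <;> cases hy : y i <;> simp
  rw [this]
  rfl

lemma disj_card_symmDiff {s t : Finset (Fin n)} (h : Disjoint s t) :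
    (s ∆ t).card = s.card + t.card := by
  rw [h.symmDiff_eq_sup]
  exact card_union_of_disjoint h

end Translate

end Klei

theorem kleitman_even (n d t : ℕ) (hn : 0 < n) (hd : 0 < d) (hdn : d < n)
    (hdt : d = 2 * t) (F : Finset (Fin n → Bool))
    (hF : ∀ x ∈ F, ∀ y ∈ F, hammingDist x y ≤ d) :
    F.card ≤ ∑ i ∈ Finset.range (t + 1), n.choose i := by
  classical
  open Klei in
  have hGcard : (F.image supp).card = F.card := Finset.card_image_of_injective F supp_injective
  have hGdiam : ∀ s ∈ F.image supp, ∀ u ∈ F.image supp, (s ∆ u).card ≤ d := by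
    intro s hs u hu
    obtain ⟨x, hx, rfl⟩ := Finset.mem_image.1 hs
    obtain ⟨y, hy, rfl⟩ := Finset.mem_image.1 hu
    rw [← hamming_supp]
    exact hF x hx y hy
  obtain ⟨B, hB1, hB2, hB3, hB4⟩ :=
    exists_good (d := d) (∑ s ∈ F.image supp, wtf s) (F.image supp) rfl hGdiam
  have hUcard : (Finset.univ : Finset (Fin n)).card = n := by simp
  have hcond : ∀ s ∈ B, ∀ u ∈ B, Disjoint s u → s.card + u.card ≤ d := by
    intro s hs u hu hdisj
    have := hB2 s hs u hu
    rwa [disj_card_symmDiff hdisj] at this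
  have hmain : B.card ≤ P (t+1) n := by
    rcases le_or_gt (P (t+1) n) B.card with h | h
    · exact core n Finset.univ hUcard d t t (by omega) (by omega) B B
        (fun s _ => Finset.subset_univ s) (fun s _ => Finset.subset_univ s)
        hB3 hB3
        (fun s hs x _ y hxy hys hxs => hB4 s hs x y hxy hys hxs)
        hcond h
    · omega
  have : F.card = B.card := by rw [hB1, hGcard]
  rw [this]
  exact hmain
end

section
/- Let n and t be positive integers with 2t+1 < n. If F is a collection of binary vectors in {0,1}^n such that the Hamming distance between any two vectors of F is at most 2t+1, then |F| ≤ 2(C(n-1,0) + C(n-1,1) + ... + C(n-1,t)). -/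
open Finset UV
open scoped FinsetFamily symmDiff

namespace KleitmanAux

variable {n : ℕ}

/-! ### counting gadgets -/

/-- number of elements of `A` with value `< x` -/
def cnt (A : Finset (Fin n)) (x : ℕ) : ℕ := #(A.filter fun a : Fin n => (a : ℕ) < x)

/-- initial segment of `Fin n` -/
def iseg (n m : ℕ) : Finset (Fin n) := univ.filter fun a => (a : ℕ) < m

lemma mem_iseg {a : Fin n} {m : ℕ} : a ∈ iseg n m ↔ (a : ℕ) < m := by
  simp [iseg]

lemma card_iseg (m : ℕ) : #(iseg n m) = min m n := by
  rw [iseg, ← Finset.card_range (min m n)]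
  refine Finset.card_bij (fun a _ => (a : ℕ)) ?_ ?_ ?_
  · intro a ha
    simp only [mem_filter, mem_univ, true_and] at ha
    simp only [mem_range]
    exact lt_min ha a.isLt
  · intro a _ b _ h
    exact Fin.val_injective h
  · intro b hb
    simp only [mem_range, lt_min_iff] at hb
    exact ⟨⟨b, hb.2⟩, by simp [hb.1], rfl⟩

lemma cnt_mono_right (A : Finset (Fin n)) {x y : ℕ} (h : x ≤ y) : cnt A x ≤ cnt A y := by
  apply card_le_card
  intro a ha
  simp only [mem_filter] at ha ⊢
  exact ⟨ha.1, lt_of_lt_of_le ha.2 h⟩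

lemma cnt_subset {A B : Finset (Fin n)} (h : A ⊆ B) (x : ℕ) : cnt A x ≤ cnt B x := by
  apply card_le_card
  intro a ha
  simp only [mem_filter] at ha ⊢
  exact ⟨h ha.1, ha.2⟩

lemma cnt_le_card (A : Finset (Fin n)) (x : ℕ) : cnt A x ≤ #A :=
  card_le_card (filter_subset _ _)

lemma cnt_le (A : Finset (Fin n)) (x : ℕ) : cnt A x ≤ x := by
  have h1 : cnt A x ≤ cnt univ x := cnt_subset (subset_univ A) x
  have h2 : cnt univ x = min x n := card_iseg x
  omega

lemma cnt_eq_card (A : Finset (Fin n)) {x : ℕ} (h : n ≤ x) : cnt A x = #A := by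
  rw [cnt, filter_true_of_mem]
  intro a _
  exact lt_of_lt_of_le a.isLt h

lemma cnt_split (A : Finset (Fin n)) {x y : ℕ} (h : x ≤ y) :
    cnt A y = cnt A x + #(A.filter fun a : Fin n => x ≤ (a : ℕ) ∧ (a : ℕ) < y) := by
  rw [cnt, cnt, ← card_union_of_disjoint]
  · congr 1
    ext a
    simp only [mem_filter, mem_union]
    constructor
    · rintro ⟨ha, h2⟩
      by_cases hx : (a : ℕ) < x
      · exact Or.inl ⟨ha, hx⟩
      · exact Or.inr ⟨ha, by omega, h2⟩
    · rintro (⟨ha, h2⟩ | ⟨ha, h2, h3⟩)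
      · exact ⟨ha, by omega⟩
      · exact ⟨ha, h3⟩
  · rw [Finset.disjoint_left]
    intro a ha hb
    simp only [mem_filter] at ha hb
    omega

lemma cnt_step (A : Finset (Fin n)) (x y : ℕ) : cnt A y ≤ cnt A x + (y - x) := by
  rcases le_total y x with h | h
  · exact le_trans (cnt_mono_right A h) (Nat.le_add_right _ _)
  · rw [cnt_split A h]
    have h2 : #(A.filter fun a : Fin n => x ≤ (a : ℕ) ∧ (a : ℕ) < y) ≤ y - x := by
      rw [← Nat.card_Ico x y]
      apply Finset.card_le_card_of_injOn (fun a : Fin n => (a : ℕ))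
      · intro a ha
        simp only [mem_coe, mem_filter] at ha
        simp only [mem_coe, Finset.mem_Ico]
        omega
      · intro a _ b _ hab
        exact Fin.val_injective hab
    omega

lemma cnt_sdiff_of_subset {A B : Finset (Fin n)} (h : B ⊆ A) (x : ℕ) :
    cnt (A \ B) x = cnt A x - cnt B x := by
  rw [cnt, cnt, cnt]
  rw [show (A \ B).filter (fun a : Fin n => (a : ℕ) < x)
      = A.filter (fun a : Fin n => (a : ℕ) < x) \ B.filter (fun a : Fin n => (a : ℕ) < x) by
    ext a; simp only [mem_filter, mem_sdiff]; tauto]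
  exact card_sdiff_of_subset (filter_subset_filter _ h)

lemma cnt_union_disjoint {A B : Finset (Fin n)} (h : Disjoint A B) (x : ℕ) :
    cnt (A ∪ B) x = cnt A x + cnt B x := by
  rw [cnt, cnt, cnt, filter_union]
  exact card_union_of_disjoint (disjoint_filter_filter h)

lemma cnt_compl (A : Finset (Fin n)) (x : ℕ) : cnt (univ \ A) x = min x n - cnt A x := by
  rw [cnt_sdiff_of_subset (subset_univ A)]
  congr 1
  exact card_iseg x

/-- bottom-`m` subsets: existence -/
lemma exists_bottom (X : Finset (Fin n)) (m : ℕ) (hm : m ≤ #X) :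
    ∃ Y ⊆ X, #Y = m ∧ ∀ y ∈ Y, ∀ z ∈ X \ Y, y < z := by
  induction m with
  | zero => exact ⟨∅, empty_subset X, card_empty, by simp⟩
  | succ m ih =>
    obtain ⟨Y, hYX, hcard, hbot⟩ := ih (by omega)
    have hne : (X \ Y).Nonempty := by
      rw [← card_pos, card_sdiff_of_subset hYX]
      omega
    set a := (X \ Y).min' hne with ha
    have haXY : a ∈ X \ Y := min'_mem _ _
    have haX : a ∈ X := (mem_sdiff.1 haXY).1
    have haY : a ∉ Y := (mem_sdiff.1 haXY).2
    refine ⟨insert a Y, ?_, ?_, ?_⟩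
    · intro b hb
      rcases mem_insert.1 hb with rfl | hb
      · exact haX
      · exact hYX hb
    · rw [card_insert_of_notMem haY, hcard]
    · intro y hy z hz
      have hz' : z ∈ X \ Y := by
        rw [mem_sdiff] at hz ⊢
        exact ⟨hz.1, fun h => hz.2 (mem_insert_of_mem h)⟩
      rcases mem_insert.1 hy with hy' | hy'
      · subst hy'
        refine lt_of_le_of_ne (min'_le _ _ hz') ?_
        intro hcon
        rw [← hcon] at hz
        exact (mem_sdiff.1 hz).2 (mem_insert_self _ _)
      · exact hbot y hy' z hz'

lemma bottom_cnt {X Y : Finset (Fin n)} (hYX : Y ⊆ X)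
    (h : ∀ y ∈ Y, ∀ z ∈ X \ Y, y < z) (x : ℕ) :
    cnt Y x = min #Y (cnt X x) := by
  by_cases hz : ∃ z ∈ X \ Y, (z : ℕ) < x
  · obtain ⟨z, hzXY, hzx⟩ := hz
    have h1 : cnt Y x = #Y := by
      rw [cnt, filter_true_of_mem]
      intro y hy
      have := h y hy z hzXY
      have : (y : ℕ) < (z : ℕ) := this
      omega
    have h2 : #Y ≤ cnt X x := by
      rw [← h1]
      exact cnt_subset hYX x
    omega
  · push_neg at hz
    have h1 : cnt X x = cnt Y x := by
      apply le_antisymm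
      · apply card_le_card
        intro a ha
        simp only [mem_filter] at ha ⊢
        refine ⟨?_, ha.2⟩
        by_contra haY
        exact absurd ha.2 (by have := hz a (mem_sdiff.2 ⟨ha.1, haY⟩); omega)
      · exact cnt_subset hYX x
    have h2 : cnt Y x ≤ #Y := cnt_le_card Y x
    omega

/-! ### shifted families and dominance -/

def Shifted (𝒜 : Finset (Finset (Fin n))) : Prop :=
  ∀ ⦃i j : Fin n⦄, i < j → ∀ ⦃A⦄, A ∈ 𝒜 → j ∈ A → i ∉ A → insert i (A.erase j) ∈ 𝒜

lemma cnt_insert {C : Finset (Fin n)} {i : Fin n} (hi : i ∉ C) (x : ℕ) :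
    cnt (insert i C) x = cnt C x + (if (i : ℕ) < x then 1 else 0) := by
  rw [cnt, cnt, filter_insert]
  split_ifs with h
  · rw [card_insert_of_notMem (fun hc => hi (mem_of_mem_filter _ hc))]
  · omega

lemma cnt_erase {A : Finset (Fin n)} {j : Fin n} (hj : j ∈ A) (x : ℕ) :
    cnt (A.erase j) x + (if (j : ℕ) < x then 1 else 0) = cnt A x := by
  rw [erase_eq, cnt_sdiff_of_subset (singleton_subset_iff.2 hj)]
  have h1 : cnt {j} x = if (j : ℕ) < x then 1 else 0 := by
    rw [cnt, filter_singleton]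
    split_ifs <;> simp
  have h2 : cnt {j} x ≤ cnt A x := cnt_subset (singleton_subset_iff.2 hj) x
  omega

/-- push-down lemma: a shifted family contains every set dominated by a member -/
lemma pushdown {𝒜 : Finset (Finset (Fin n))} (hsh : Shifted 𝒜) :
    ∀ A B : Finset (Fin n), A ∈ 𝒜 → #B = #A → (∀ x, cnt A x ≤ cnt B x) → B ∈ 𝒜 := by
  suffices H : ∀ μ : ℕ, ∀ A B : Finset (Fin n), (∑ a ∈ A, ((a : ℕ) + 1)) = μ → A ∈ 𝒜 →
      B.card = #A → (∀ x, cnt A x ≤ cnt B x) → B ∈ 𝒜 by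
    intro A B hA hcard hcnt
    exact H _ A B rfl hA hcard hcnt
  intro μ
  induction μ using Nat.strong_induction_on with
  | _ μ IH =>
  intro A B hμ hA hcard hcnt
  by_cases hAB : A = B
  · rwa [hAB] at hA
  -- A \ B is nonempty
  have hABne : (A \ B).Nonempty := by
    rw [← card_pos]
    by_contra hc
    push_neg at hc
    interval_cases h : #(A \ B)
    · have : A ⊆ B := by
        intro a ha
        by_contra hb
        have : a ∈ A \ B := mem_sdiff.2 ⟨ha, hb⟩
        rw [card_eq_zero] at h
        simp [h] at this
      exact hAB (eq_of_subset_of_card_le this (le_of_eq hcard))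
  set j := (A \ B).max' hABne with hj
  have hjAB : j ∈ A \ B := max'_mem _ _
  have hjA : j ∈ A := (mem_sdiff.1 hjAB).1
  have hjB : j ∉ B := (mem_sdiff.1 hjAB).2
  -- find i ∈ B \ A with i < j
  have hBA : ((B \ A).filter fun a : Fin n => a < j).Nonempty := by
    rw [← card_pos]
    by_contra hc
    push_neg at hc
    have hempty : (B \ A).filter (fun a : Fin n => a < j) = ∅ := card_eq_zero.1 (by omega)
    -- counting at x = j+1
    have e1 : cnt A ((j : ℕ) + 1) = cnt (A ∩ B) ((j : ℕ) + 1) + cnt (A \ B) ((j : ℕ) + 1) := by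
      rw [← cnt_union_disjoint (disjoint_sdiff_inter A B).symm]
      congr 1
      rw [union_comm, sdiff_union_inter]
    have e2 : cnt B ((j : ℕ) + 1) = cnt (A ∩ B) ((j : ℕ) + 1) + cnt (B \ A) ((j : ℕ) + 1) := by
      rw [inter_comm A B, ← cnt_union_disjoint (disjoint_sdiff_inter B A).symm]
      congr 1
      rw [union_comm, sdiff_union_inter]
    have e3 : 1 ≤ cnt (A \ B) ((j : ℕ) + 1) := by
      rw [← card_singleton j]
      apply card_le_card
      intro a ha
      rw [mem_singleton] at ha
      subst ha
      simp only [mem_filter]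
      exact ⟨hjAB, Nat.lt_succ_self _⟩
    have e4 : cnt (B \ A) ((j : ℕ) + 1) = 0 := by
      rw [cnt, card_eq_zero]
      rw [eq_empty_iff_forall_notMem]
      intro a ha
      simp only [mem_filter] at ha
      have haj : a ≠ j := by
        intro h
        subst h
        exact (mem_sdiff.1 ha.1).2 hjA
      have : a ∈ (B \ A).filter (fun a : Fin n => a < j) := by
        simp only [mem_filter]
        refine ⟨ha.1, ?_⟩
        have : (a : ℕ) < (j : ℕ) + 1 := ha.2
        have : (a : ℕ) < (j : ℕ) := by
          rcases lt_or_eq_of_le (Nat.lt_succ_iff.1 this) with h | h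
          · exact h
          · exact absurd (Fin.val_injective h) haj
        exact this
      simp [hempty] at this
    have := hcnt ((j : ℕ) + 1)
    omega
  set i := ((B \ A).filter fun a : Fin n => a < j).max' hBA with hi
  have hiS : i ∈ (B \ A).filter fun a : Fin n => a < j := max'_mem _ _
  have hiBA : i ∈ B \ A := (mem_filter.1 hiS).1
  have hiA : i ∉ A := (mem_sdiff.1 hiBA).2
  have hiB : i ∈ B := (mem_sdiff.1 hiBA).1
  have hij : i < j := (mem_filter.1 hiS).2
  -- the shifted set
  set A' := insert i (A.erase j) with hA'
  have hiAe : i ∉ A.erase j := fun h => hiA (mem_of_mem_erase h)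
  have hA'mem : A' ∈ 𝒜 := hsh hij hA hjA hiA
  have hcardA' : #A' = #A := by
    rw [hA', card_insert_of_notMem hiAe, card_erase_of_mem hjA]
    have : 1 ≤ #A := card_pos.2 ⟨j, hjA⟩
    omega
  -- dominance transfers
  have hcnt' : ∀ x, cnt A' x ≤ cnt B x := by
    intro x
    have e5 : cnt A' x = cnt (A.erase j) x + (if (i : ℕ) < x then 1 else 0) := cnt_insert hiAe x
    have e6 := cnt_erase hjA x
    by_cases hjx : (j : ℕ) < x
    · have hix : (i : ℕ) < x := lt_trans hij hjx
      have := hcnt x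
      simp only [hjx, hix, if_true] at e5 e6
      omega
    · by_cases hix : (i : ℕ) < x
      · -- hard case : need strict inequality
        simp only [hjx, hix, if_true, if_false] at e5 e6
        have hstrict : cnt A x < cnt B x := by
          by_contra hc
          push_neg at hc
          have heq : cnt B x = cnt A x := le_antisymm hc (hcnt x)
          have hxj : x ≤ (j : ℕ) := by omega
          have d1 : cnt A ((j : ℕ) + 1) = cnt A x
              + #(A.filter fun a : Fin n => x ≤ (a : ℕ) ∧ (a : ℕ) < (j : ℕ) + 1) :=
            cnt_split A (by omega)
          have d2 : cnt B ((j : ℕ) + 1) = cnt B x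
              + #(B.filter fun a : Fin n => x ≤ (a : ℕ) ∧ (a : ℕ) < (j : ℕ) + 1) :=
            cnt_split B (by omega)
          have dsub : B.filter (fun a : Fin n => x ≤ (a : ℕ) ∧ (a : ℕ) < (j : ℕ) + 1)
              ⊆ (A.filter fun a : Fin n => x ≤ (a : ℕ) ∧ (a : ℕ) < (j : ℕ) + 1).erase j := by
            intro b hb
            simp only [mem_filter] at hb
            have hbj : b ≠ j := fun h => hjB (h ▸ hb.1)
            have hbltj : (b : ℕ) < (j : ℕ) := by
              have : (b : ℕ) ≠ (j : ℕ) := fun h => hbj (Fin.val_injective h)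
              omega
            have hbA : b ∈ A := by
              by_contra hbA
              have hbBA : b ∈ (B \ A).filter fun a : Fin n => a < j := by
                simp only [mem_filter, mem_sdiff]
                exact ⟨⟨hb.1, hbA⟩, hbltj⟩
              have : b ≤ i := le_max' _ _ hbBA
              have : (b : ℕ) ≤ (i : ℕ) := this
              omega
            apply mem_erase_of_ne_of_mem hbj
            simp only [mem_filter]
            exact ⟨hbA, hb.2⟩
          have dj : j ∈ A.filter fun a : Fin n => x ≤ (a : ℕ) ∧ (a : ℕ) < (j : ℕ) + 1 := by
            simp only [mem_filter]
            exact ⟨hjA, by omega⟩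
          have dcard := card_le_card dsub
          rw [card_erase_of_mem dj] at dcard
          have dpos : 1 ≤ #(A.filter fun a : Fin n => x ≤ (a : ℕ) ∧ (a : ℕ) < (j : ℕ) + 1) :=
            card_pos.2 ⟨j, dj⟩
          have := hcnt ((j : ℕ) + 1)
          omega
        omega
      · simp only [hjx, hix, if_false] at e5 e6
        have := hcnt x
        omega
  -- measure decreases
  have hsum : (∑ a ∈ A', ((a : ℕ) + 1)) < μ := by
    have hsplit : (∑ a ∈ A', ((a : ℕ) + 1)) + ((j : ℕ) + 1)
        = ((i : ℕ) + 1) + ∑ a ∈ A, ((a : ℕ) + 1) := by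
      rw [hA', sum_insert hiAe, ← Finset.sum_erase_add A _ hjA]
      ring
    have hij' : (i : ℕ) < (j : ℕ) := hij
    omega
  exact IH _ hsum A' B rfl hA'mem (by omega) hcnt'

/-! ### Frankl's lemma and Katona's theorem for shifted families -/

lemma frankl {𝒜 : Finset (Finset (Fin n))} {k s : ℕ} (hsh : Shifted 𝒜)
    (hsized : ∀ A ∈ 𝒜, #A = k) (hint : ∀ A ∈ 𝒜, ∀ B ∈ 𝒜, s ≤ #(A ∩ B))
    (hs1 : 1 ≤ s) (hsk : s ≤ k) (hkn : 2 * k + 1 ≤ n + s) {A : Finset (Fin n)} (hA : A ∈ 𝒜) :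
    ∃ i, s + 2 * i ≤ n ∧ s + i ≤ cnt A (s + 2 * i) := by
  have hkA : #A = k := hsized A hA
  by_cases hP : ∃ x, x + s ≤ 2 * cnt A x
  · obtain ⟨x, hx⟩ := hP
    have h1 : cnt A x ≤ x := cnt_le A x
    have h2 : cnt A x ≤ k := hkA ▸ cnt_le_card A x
    refine ⟨cnt A x - s, by omega, ?_⟩
    have h3 : x ≤ s + 2 * (cnt A x - s) := by omega
    have h4 := cnt_mono_right A h3
    omega
  · push_neg at hP
    exfalso
    obtain ⟨A₁, hA₁sub, hA₁card, hA₁bot⟩ := exists_bottom A (s - 1) (by omega)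
    obtain ⟨C, hCsub, hCcard, hCbot⟩ := exists_bottom (univ \ A) (k - s + 1) (by
      rw [card_sdiff_of_subset (subset_univ A), card_univ, Fintype.card_fin, hkA]
      omega)
    have hdisj : Disjoint A₁ C := by
      rw [Finset.disjoint_left]
      intro a ha hc
      exact (mem_sdiff.1 (hCsub hc)).2 (hA₁sub ha)
    set B := A₁ ∪ C with hB
    have hBcard : #B = #A := by
      rw [hB, card_union_of_disjoint hdisj, hkA]
      omega
    have hBin : B ∈ 𝒜 := by
      apply pushdown hsh A B hA hBcard
      intro x
      have c1 : cnt B x = cnt A₁ x + cnt C x := cnt_union_disjoint hdisj x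
      have c2 : cnt A₁ x = min (s - 1) (cnt A x) := by
        rw [bottom_cnt hA₁sub hA₁bot x, hA₁card]
      have c3 : cnt C x = min (k - s + 1) (min x n - cnt A x) := by
        rw [bottom_cnt hCsub hCbot x, hCcard, cnt_compl]
      have h4 := hP x
      have h5 := hP n
      have h6 : cnt A x ≤ k := hkA ▸ cnt_le_card A x
      have h7 : cnt A x ≤ x := cnt_le A x
      rcases le_total x n with hxn | hxn
      · have : min x n = x := by omega
        omega
      · have e1 : cnt A x = k := by rw [cnt_eq_card A hxn, hkA]
        have e2 : cnt A n = k := by rw [cnt_eq_card A le_rfl, hkA]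
        have : min x n = n := by omega
        omega
    have h8 : s ≤ #(A ∩ B) := hint A hA B hBin
    have h9 : A ∩ B ⊆ A₁ := by
      intro a ha
      rw [mem_inter] at ha
      rcases mem_union.1 ha.2 with h | h
      · exact h
      · exact absurd ha.1 (mem_sdiff.1 (hCsub h)).2
    have := card_le_card h9
    omega

lemma cnt_zero_of_high {A : Finset (Fin n)} {m : ℕ} {x : ℕ} (hx : x ≤ m) :
    cnt (A \ iseg n m) x = 0 := by
  rw [cnt, card_eq_zero, eq_empty_iff_forall_notMem]
  intro a ha
  simp only [mem_filter, mem_sdiff, mem_iseg] at ha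
  omega

lemma cnt_symmpart {A : Finset (Fin n)} {m x : ℕ} (hx : x ≤ m) (hm : m ≤ n) :
    cnt ((A \ iseg n m) ∪ (iseg n m \ A)) x = x - cnt A x := by
  have hdisj : Disjoint (A \ iseg n m) (iseg n m \ A) := by
    rw [Finset.disjoint_left]
    intro a ha hb
    exact (mem_sdiff.1 ha).2 (mem_sdiff.1 hb).1
  rw [cnt_union_disjoint hdisj, cnt_zero_of_high hx, zero_add]
  have e1 : (iseg n m \ A).filter (fun a : Fin n => (a : ℕ) < x)
      = (univ \ A).filter (fun a : Fin n => (a : ℕ) < x) := by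
    ext a
    simp only [mem_filter, mem_sdiff, mem_iseg, mem_univ, true_and]
    constructor
    · rintro ⟨⟨_, h2⟩, h3⟩; exact ⟨h2, h3⟩
    · rintro ⟨h2, h3⟩; exact ⟨⟨by omega, h2⟩, h3⟩
  rw [cnt, e1, ← cnt, cnt_compl]
  have : min x n = x := by omega
  omega

lemma symmpart_recover {A : Finset (Fin n)} {m : ℕ} :
    ((((A \ iseg n m) ∪ (iseg n m \ A)) \ iseg n m)
      ∪ (iseg n m \ ((A \ iseg n m) ∪ (iseg n m \ A)))) = A := by
  ext a
  simp only [mem_union, mem_sdiff]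
  by_cases h1 : a ∈ iseg n m <;> by_cases h2 : a ∈ A <;> tauto

lemma katona_shifted {𝒜 : Finset (Finset (Fin n))} {k s : ℕ} (hsh : Shifted 𝒜)
    (hsized : ∀ A ∈ 𝒜, #A = k) (hint : ∀ A ∈ 𝒜, ∀ B ∈ 𝒜, s ≤ #(A ∩ B))
    (hs1 : 1 ≤ s) (hsk : s ≤ k) (hkn : 2 * k + 1 ≤ n + s) :
    𝒜.card ≤ #(∂^[s] 𝒜) := by
  classical
  have hex : ∀ A : Finset (Fin n), A ∈ 𝒜 → ∃ i, s + 2 * i ≤ n ∧ s + i ≤ cnt A (s + 2 * i) :=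
    fun A hA => frankl hsh hsized hint hs1 hsk hkn hA
  set f : Finset (Fin n) → Finset (Fin n) := fun A =>
    if h : ∃ i, s + 2 * i ≤ n ∧ s + i ≤ cnt A (s + 2 * i) then
      (A \ iseg n (s + 2 * Nat.find h)) ∪ (iseg n (s + 2 * Nat.find h) \ A)
    else ∅ with hf
  -- main facts about f on 𝒜
  have main : ∀ A : Finset (Fin n), ∀ hA : A ∈ 𝒜, ∃ i : ℕ,
      s + 2 * i ≤ n ∧ cnt A (s + 2 * i) = s + i ∧
      (∀ j, j < i → cnt A (s + 2 * j) + 1 ≤ s + j) ∧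
      f A = (A \ iseg n (s + 2 * i)) ∪ (iseg n (s + 2 * i) \ A) := by
    intro A hA
    have h := hex A hA
    set i := Nat.find h with hi
    have hspec := Nat.find_spec h
    have hmin : ∀ j, j < i → cnt A (s + 2 * j) + 1 ≤ s + j := by
      intro j hj
      have := Nat.find_min h hj
      push_neg at this
      have hjn : s + 2 * j ≤ n := by
        have := hspec.1
        omega
      have := this hjn
      omega
    refine ⟨i, hspec.1, ?_, hmin, ?_⟩
    · refine le_antisymm ?_ hspec.2
      rcases Nat.eq_zero_or_pos i with hi0 | hipos
      · rw [hi0]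
        simpa using cnt_le A (s + 2 * 0)
      · have h1 := hmin (i - 1) (by omega)
        have h2 := cnt_step A (s + 2 * (i - 1)) (s + 2 * i)
        omega
    · rw [hf]
      simp only
      rw [dif_pos h]
  -- strict lower bounds below the critical index
  have below : ∀ A : Finset (Fin n), A ∈ 𝒜 → ∀ i : ℕ,
      cnt A (s + 2 * i) = s + i →
      (∀ j, j < i → cnt A (s + 2 * j) + 1 ≤ s + j) →
      ∀ x, x < s + 2 * i → 2 * cnt A x ≤ x + s := by
    intro A hA i hcrit hmin x hx
    rcases lt_or_ge x s with hxs | hxs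
    · have := cnt_le A x
      omega
    · obtain ⟨j, hji, hcase⟩ : ∃ j, j < i ∧ (x = s + 2 * j ∨ x = s + 2 * j + 1) :=
        ⟨(x - s) / 2, by omega, by omega⟩
      have h1 := hmin j hji
      have h2 := cnt_step A (s + 2 * j) x
      omega
  -- f maps into the iterated shadow
  have fmem : ∀ A : Finset (Fin n), A ∈ 𝒜 → f A ∈ ∂^[s] 𝒜 := by
    intro A hA
    obtain ⟨i, hin, hcrit, hmin, hfA⟩ := main A hA
    set m := s + 2 * i with hm
    set I := iseg n m with hI
    set X := A.filter (fun a : Fin n => (a : ℕ) < m) with hX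
    have hXcard : #X = s + i := hcrit
    obtain ⟨K, hKsub, hKcard, hKbot⟩ := exists_bottom X s (by omega)
    set T := X \ K with hT
    have hTX : T ⊆ X := sdiff_subset
    have hXA : X ⊆ A := filter_subset _ _
    have hXI : X ⊆ I := by
      intro a ha
      rw [hI, mem_iseg]
      exact (mem_filter.1 ha).2
    have hTcard : #T = i := by
      rw [hT, card_sdiff_of_subset hKsub, hXcard, hKcard]
      omega
    set C := (A \ T) ∪ (I \ A) with hC
    have hIA : I \ A = I \ X := by
      ext a
      simp only [mem_sdiff, hX, mem_filter, hI, mem_iseg]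
      tauto
    have hIcard : #I = m := by
      rw [hI, card_iseg]
      omega
    have hIAcard : #(I \ A) = i := by
      rw [hIA, card_sdiff_of_subset hXI, hIcard, hXcard]
      omega
    have hdisjC : Disjoint (A \ T) (I \ A) := by
      rw [Finset.disjoint_left]
      intro a ha hb
      exact (mem_sdiff.1 hb).2 (mem_sdiff.1 ha).1
    have hCcard : #C = #A := by
      rw [hC, card_union_of_disjoint hdisjC, card_sdiff_of_subset (hTX.trans hXA), hTcard, hIAcard]
      have : i ≤ #A := by
        have := card_le_card (hTX.trans hXA)
        omega
      omega
    -- dominance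
    have hdom : ∀ x, cnt A x ≤ cnt C x := by
      intro x
      have c1 : cnt C x = cnt (A \ T) x + cnt (I \ A) x := cnt_union_disjoint hdisjC x
      have c2 : cnt (A \ T) x = cnt A x - cnt T x := cnt_sdiff_of_subset (hTX.trans hXA) x
      have c3 : cnt T x = cnt X x - cnt K x := by
        rw [hT]
        exact cnt_sdiff_of_subset hKsub x
      have c4 : cnt K x = min s (cnt X x) := by
        rw [bottom_cnt hKsub hKbot x, hKcard]
      have c5 : cnt T x ≤ cnt (I \ A) x := by
        rcases le_or_gt m x with hmx | hmx
        · have e1 : cnt (I \ A) x = i := by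
            rw [cnt, filter_true_of_mem, hIAcard]
            intro a ha
            have : a ∈ I := (mem_sdiff.1 ha).1
            rw [hI, mem_iseg] at this
            omega
          have := cnt_le_card T x
          omega
        · have e1 : cnt X x = cnt A x := by
            rw [hX, cnt, cnt, filter_filter]
            congr 1
            apply filter_congr
            intro a _
            constructor
            · intro hp
              exact hp.2
            · intro hp
              exact ⟨by omega, hp⟩
          have e2 : cnt (I \ A) x = x - cnt A x := by
            have := cnt_symmpart (A := A) (m := m) (x := x) hmx.le (by omega)
            have hz : cnt (A \ I) x = 0 := cnt_zero_of_high hmx.le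
            have hd2 : Disjoint (A \ I) (I \ A) := by
              rw [Finset.disjoint_left]
              intro a ha hb
              exact (mem_sdiff.1 hb).2 (mem_sdiff.1 ha).1
            rw [cnt_union_disjoint hd2, hz, zero_add] at this
            exact this
          have e3 := below A hA i hcrit hmin x (by omega)
          have := cnt_le_card K x
          omega
      have := cnt_subset (show T ⊆ A from hTX.trans hXA) x
      omega
    have hCin : C ∈ 𝒜 := pushdown hsh A C hA hCcard hdom
    -- f A ⊆ C and C \ f A = K
    have hsub : f A ⊆ C := by
      rw [hfA, hC]
      intro a ha
      rcases mem_union.1 ha with h | h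
      · apply mem_union_left
        rw [mem_sdiff] at h ⊢
        refine ⟨h.1, fun hT' => h.2 (hXI (hTX hT'))⟩
      · exact mem_union_right _ h
    have hdiff : C \ f A = K := by
      have hKX : X \ T = K := by
        rw [hT, sdiff_sdiff_right_self]
        exact inf_eq_right.mpr hKsub
      rw [hfA, hC, ← hKX]
      ext a
      simp only [mem_sdiff, mem_union, hX, mem_filter, hI, mem_iseg, hT]
      by_cases h1 : (a : ℕ) < m <;> by_cases h2 : a ∈ A <;> tauto
    rw [mem_shadow_iterate_iff_exists_sdiff]
    exact ⟨C, hCin, hsub, by rw [hdiff, hKcard]⟩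
  -- injectivity
  have finj : ∀ A ∈ 𝒜, ∀ B ∈ 𝒜, f A = f B → A = B := by
    intro A hA B hB hfeq
    obtain ⟨i, hin, hcrit, hmin, hfA⟩ := main A hA
    obtain ⟨i', hin', hcrit', hmin', hfB⟩ := main B hB
    -- counting in the image
    have scount : ∀ (D : Finset (Fin n)) (iD : ℕ), s + 2 * iD ≤ n → cnt D (s + 2 * iD) = s + iD →
        ∀ x, x ≤ s + 2 * iD →
        cnt ((D \ iseg n (s + 2 * iD)) ∪ (iseg n (s + 2 * iD) \ D)) x = x - cnt D x :=
      fun D iD h1 _ x hx => cnt_symmpart hx h1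
    have key : i = i' := by
      by_contra hne
      wlog hlt : i < i' generalizing A B i i'
      · exact this B hB A hA hfeq.symm i' hin' hcrit' hmin' hfB i hin hcrit hmin hfA
          (Ne.symm hne) (by omega)
      · have e1 : cnt (f A) (s + 2 * i) = i := by
          rw [hfA, scount A i hin hcrit (s + 2 * i) le_rfl, hcrit]
          omega
        have e2 : cnt (f B) (s + 2 * i) = (s + 2 * i) - cnt B (s + 2 * i) := by
          rw [hfB]
          exact scount B i' hin' hcrit' (s + 2 * i) (by omega)
        have e3 := hmin' i hlt
        rw [hfeq, e2] at e1
        have := cnt_le B (s + 2 * i)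
        omega
    subst key
    have r1 : ((f A \ iseg n (s + 2 * i)) ∪ (iseg n (s + 2 * i) \ f A)) = A := by
      rw [hfA]
      exact symmpart_recover
    have r2 : ((f B \ iseg n (s + 2 * i)) ∪ (iseg n (s + 2 * i) \ f B)) = B := by
      rw [hfB]
      exact symmpart_recover
    rw [← r1, ← r2, hfeq]
  -- conclude
  calc #𝒜 = #(𝒜.image f) := (card_image_of_injOn (fun A hA B hB h => finj A hA B hB h)).symm
    _ ≤ #(∂^[s] 𝒜) := by
        apply card_le_card
        intro S hS
        obtain ⟨A, hA, rfl⟩ := mem_image.1 hS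
        exact fmem A hA

/-! ### compression machinery -/

lemma sum_compression_lt {u v : Finset (Fin n)} {𝒜 : Finset (Finset (Fin n))}
    (w : Finset (Fin n) → ℕ)
    (hw : ∀ A ∈ 𝒜, compress u v A ∉ 𝒜 → w (compress u v A) < w A)
    (hne : 𝓒 u v 𝒜 ≠ 𝒜) :
    ∑ A ∈ 𝓒 u v 𝒜, w A < ∑ A ∈ 𝒜, w A := by
  rw [UV.compression] at hne ⊢
  have q : ∀ Q ∈ {A ∈ 𝒜 | compress u v A ∉ 𝒜}, compress u v Q ≠ Q := by
    simp_rw [mem_filter]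
    intro Q hQ h
    rw [h] at hQ
    exact hQ.2 hQ.1
  have uA : {A ∈ 𝒜 | compress u v A ∈ 𝒜} ∪ {A ∈ 𝒜 | compress u v A ∉ 𝒜} = 𝒜 :=
    filter_union_filter_not_eq _ _
  have ne₂ : {A ∈ 𝒜 | compress u v A ∉ 𝒜}.Nonempty := by
    refine nonempty_iff_ne_empty.2 fun z => hne ?_
    rw [filter_image, z, image_empty, union_empty]
    rwa [z, union_empty] at uA
  rw [sum_union compress_disjoint]
  conv_rhs => rw [← uA]
  rw [sum_union (disjoint_filter_filter_not _ _ _), add_lt_add_iff_left, filter_image,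
    sum_image compress_injOn]
  refine sum_lt_sum_of_nonempty ne₂ fun A hA => ?_
  rw [mem_filter] at hA
  exact hw A hA.1 hA.2

lemma compress_singleton {i j : Fin n} (A : Finset (Fin n)) (hij : i ≠ j) :
    compress {i} {j} A = A ∨
      (j ∈ A ∧ i ∉ A ∧ compress {i} {j} A = insert i (A.erase j)) := by
  rw [compress]
  split_ifs with h
  · right
    obtain ⟨h1, h2⟩ := h
    rw [Finset.disjoint_left] at h1
    have hiA : i ∉ A := fun hiA => h1 (mem_singleton_self i) hiA
    have hjA : j ∈ A := singleton_subset_iff.1 h2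
    refine ⟨hjA, hiA, ?_⟩
    rw [sup_eq_union, union_comm, ← insert_eq, sdiff_singleton_eq_erase]
    exact erase_insert_of_ne hij
  · left; rfl

lemma mem_compression_cases {i j : Fin n} (hij : i ≠ j) {𝒜 : Finset (Finset (Fin n))}
    {X : Finset (Fin n)} (hX : X ∈ 𝓒 {i} {j} 𝒜) :
    (X ∈ 𝒜 ∧ compress {i} {j} X ∈ 𝒜) ∨
      (X ∉ 𝒜 ∧ ∃ B ∈ 𝒜, j ∈ B ∧ i ∉ B ∧ X = insert i (B.erase j)) := by
  rw [mem_compression] at hX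
  rcases hX with h | ⟨hX, B, hB, hcB⟩
  · exact Or.inl h
  · right
    refine ⟨hX, B, hB, ?_⟩
    rcases compress_singleton B hij with h | ⟨h1, h2, h3⟩
    · rw [h] at hcB
      exact absurd (hcB ▸ hB) hX
    · exact ⟨h1, h2, (h3 ▸ hcB).symm⟩

lemma int_compression {i j : Fin n} (hij : i < j) {s : ℕ} {𝒜 : Finset (Finset (Fin n))}
    (hint : ∀ A ∈ 𝒜, ∀ B ∈ 𝒜, s ≤ #(A ∩ B)) :
    ∀ A ∈ 𝓒 {i} {j} 𝒜, ∀ B ∈ 𝓒 {i} {j} 𝒜, s ≤ #(A ∩ B) := by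
  rcases Nat.eq_zero_or_pos s with rfl | hs1
  · intro A _ B _
    exact Nat.zero_le _
  have hij' : i ≠ j := ne_of_lt hij
  -- key asymmetric case
  have key : ∀ X ∈ 𝒜, compress {i} {j} X ∈ 𝒜 →
      ∀ B ∈ 𝒜, j ∈ B → i ∉ B → s ≤ #(X ∩ insert i (B.erase j)) := by
    intro X hX hcX B hB hjB hiB
    by_cases hjX : j ∈ X
    · by_cases hiX : i ∈ X
      · -- j ∈ X, i ∈ X
        have hsub : insert i ((X ∩ B).erase j) ⊆ X ∩ insert i (B.erase j) := by
          intro a ha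
          rcases mem_insert.1 ha with rfl | ha
          · exact mem_inter.2 ⟨hiX, mem_insert_self _ _⟩
          · rw [mem_erase, mem_inter] at ha
            exact mem_inter.2 ⟨ha.2.1, mem_insert_of_mem (mem_erase.2 ⟨ha.1, ha.2.2⟩)⟩
        have hjXB : j ∈ X ∩ B := mem_inter.2 ⟨hjX, hjB⟩
        have hiXB : i ∉ (X ∩ B).erase j := fun h => hiB (mem_inter.1 (mem_of_mem_erase h)).2
        have hc : #(insert i ((X ∩ B).erase j)) = #(X ∩ B) := by
          rw [card_insert_of_notMem hiXB, card_erase_of_mem hjXB]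
          have : 0 < #(X ∩ B) := card_pos.2 ⟨j, hjXB⟩
          omega
        have := card_le_card hsub
        have := hint X hX B hB
        omega
      · -- j ∈ X, i ∉ X : use compress X ∈ 𝒜
        rcases compress_singleton X hij' with h | ⟨_, _, h⟩
        · rw [compress] at h
          split_ifs at h with hcond
          · exfalso
            have : j ∈ (X ⊔ {i}) \ {j} := h.symm ▸ hjX
            simp at this
          · exact absurd ⟨by simpa using hiX, by simpa using hjX⟩ hcond
        · rw [h] at hcX
          have h1 : s ≤ #(B ∩ insert i (X.erase j)) := hint B hB _ hcX
          have h2 : B ∩ insert i (X.erase j) ⊆ (B ∩ X).erase j := by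
            intro a ha
            rw [mem_inter] at ha
            rcases mem_insert.1 ha.2 with rfl | h3
            · exact absurd ha.1 hiB
            · rw [mem_erase] at h3
              exact mem_erase.2 ⟨h3.1, mem_inter.2 ⟨ha.1, h3.2⟩⟩
          have h3 : s + 1 ≤ #(B ∩ X) := by
            have hjBX : j ∈ B ∩ X := mem_inter.2 ⟨hjB, hjX⟩
            have := card_le_card h2
            rw [card_erase_of_mem hjBX] at this
            have : 0 < #(B ∩ X) := card_pos.2 ⟨j, hjBX⟩
            omega
          have h4 : (X ∩ B).erase j ⊆ X ∩ insert i (B.erase j) := by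
            intro a ha
            rw [mem_erase, mem_inter] at ha
            exact mem_inter.2 ⟨ha.2.1, mem_insert_of_mem (mem_erase.2 ⟨ha.1, ha.2.2⟩)⟩
          have h5 := card_le_card h4
          have hjXB : j ∈ X ∩ B := mem_inter.2 ⟨hjX, hjB⟩
          rw [card_erase_of_mem hjXB] at h5
          rw [inter_comm B X] at h3
          omega
    · -- j ∉ X
      have hsub : X ∩ B ⊆ X ∩ insert i (B.erase j) := by
        intro a ha
        rw [mem_inter] at ha
        have haj : a ≠ j := fun h => hjX (h ▸ ha.1)
        exact mem_inter.2 ⟨ha.1, mem_insert_of_mem (mem_erase.2 ⟨haj, ha.2⟩)⟩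
      have := card_le_card hsub
      have := hint X hX B hB
      omega
  intro X hX Y hY
  rcases mem_compression_cases hij' hX with ⟨hX1, hX2⟩ | ⟨_, A, hA, hjA, hiA, rfl⟩ <;>
    rcases mem_compression_cases hij' hY with ⟨hY1, hY2⟩ | ⟨_, B, hB, hjB, hiB, rfl⟩
  · exact hint X hX1 Y hY1
  · exact key X hX1 hX2 B hB hjB hiB
  · rw [inter_comm]
    exact key Y hY1 hY2 A hA hjA hiA
  · -- both moved
    have hsub : insert i ((A ∩ B).erase j) ⊆ insert i (A.erase j) ∩ insert i (B.erase j) := by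
      intro a ha
      rcases mem_insert.1 ha with rfl | ha
      · exact mem_inter.2 ⟨mem_insert_self _ _, mem_insert_self _ _⟩
      · rw [mem_erase, mem_inter] at ha
        exact mem_inter.2 ⟨mem_insert_of_mem (mem_erase.2 ⟨ha.1, ha.2.1⟩),
          mem_insert_of_mem (mem_erase.2 ⟨ha.1, ha.2.2⟩)⟩
    have hjAB : j ∈ A ∩ B := mem_inter.2 ⟨hjA, hjB⟩
    have hiAB : i ∉ (A ∩ B).erase j := fun h => hiA (mem_inter.1 (mem_of_mem_erase h)).1
    have hc : #(insert i ((A ∩ B).erase j)) = #(A ∩ B) := by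
      rw [card_insert_of_notMem hiAB, card_erase_of_mem hjAB]
      have : 0 < #(A ∩ B) := card_pos.2 ⟨j, hjAB⟩
      omega
    have := card_le_card hsub
    have := hint A hA B hB
    omega

lemma card_iterate_shadow_compression_le {i j : Fin n} (𝒜 : Finset (Finset (Fin n))) (m : ℕ) :
    #(∂^[m] (𝓒 {i} {j} 𝒜)) ≤ #(∂^[m] 𝒜) := by
  have huv : ∀ (ℬ : Finset (Finset (Fin n))), ∀ x ∈ ({i} : Finset (Fin n)),
      ∃ y ∈ ({j} : Finset (Fin n)),
        IsCompressed (({i} : Finset (Fin n)).erase x) (({j} : Finset (Fin n)).erase y) ℬ := by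
    intro ℬ x hx
    refine ⟨j, mem_singleton_self j, ?_⟩
    rw [mem_singleton] at hx
    subst hx
    rw [erase_singleton, erase_singleton]
    exact UV.compression_self _ _
  have hsub : ∀ m, ∂^[m] (𝓒 {i} {j} 𝒜) ⊆ 𝓒 {i} {j} (∂^[m] 𝒜) := by
    intro m
    induction m with
    | zero => simp [Finset.Subset.refl]
    | succ m ih =>
      rw [Function.iterate_succ_apply', Function.iterate_succ_apply']
      calc ∂ (∂^[m] (𝓒 {i} {j} 𝒜)) ⊆ ∂ (𝓒 {i} {j} (∂^[m] 𝒜)) := shadow_mono ih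
        _ ⊆ 𝓒 {i} {j} (∂ (∂^[m] 𝒜)) :=
          UV.shadow_compression_subset_compression_shadow _ _ (huv _)
  calc #(∂^[m] (𝓒 {i} {j} 𝒜)) ≤ #(𝓒 {i} {j} (∂^[m] 𝒜)) := card_le_card (hsub m)
    _ = #(∂^[m] 𝒜) := UV.card_compression _ _ _

/-- Katona's intersecting-shadow theorem. -/
theorem katona {k s : ℕ} (𝒜 : Finset (Finset (Fin n)))
    (hsized : ∀ A ∈ 𝒜, #A = k) (hint : ∀ A ∈ 𝒜, ∀ B ∈ 𝒜, s ≤ #(A ∩ B))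
    (hsk : s ≤ k) (hkn : 2 * k + 1 ≤ n + s) :
    𝒜.card ≤ #(∂^[s] 𝒜) := by
  rcases Nat.eq_zero_or_pos s with rfl | hs1
  · simp
  suffices H : ∀ μ : ℕ, ∀ 𝒜 : Finset (Finset (Fin n)),
      (∑ A ∈ 𝒜, ∑ a ∈ A, (a : ℕ)) = μ → (∀ A ∈ 𝒜, #A = k) →
      (∀ A ∈ 𝒜, ∀ B ∈ 𝒜, s ≤ #(A ∩ B)) → #𝒜 ≤ #(∂^[s] 𝒜) by
    exact H _ 𝒜 rfl hsized hint
  intro μ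
  induction μ using Nat.strong_induction_on with
  | _ μ IH =>
  intro 𝒜 hμ hsized hint
  by_cases hall : ∀ i j : Fin n, i < j → 𝓒 {i} {j} 𝒜 = 𝒜
  · apply katona_shifted (k := k) ?_ hsized hint hs1 hsk hkn
    intro i j hij A hA hjA hiA
    have h1 : compress {i} {j} A ∈ 𝓒 {i} {j} 𝒜 := compress_mem_compression hA
    rw [hall i j hij] at h1
    rcases compress_singleton A (ne_of_lt hij) with h | ⟨_, _, h⟩
    · rw [compress] at h
      split_ifs at h with hcond
      · exfalso
        have : j ∈ (A ⊔ {i}) \ {j} := h.symm ▸ hjA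
        simp at this
      · exact absurd ⟨by simpa using hiA, by simpa using hjA⟩ hcond
    · rwa [h] at h1
  · push_neg at hall
    obtain ⟨i, j, hij, hne⟩ := hall
    set ℬ := 𝓒 {i} {j} 𝒜 with hℬ
    have hmeas : (∑ A ∈ ℬ, ∑ a ∈ A, (a : ℕ)) < μ := by
      rw [← hμ]
      apply sum_compression_lt _ _ hne
      intro A hA hcA
      have hcAne : compress {i} {j} A ≠ A := fun h => hcA (h.symm ▸ hA)
      rcases compress_singleton A (ne_of_lt hij) with h | ⟨hjA, hiA, h⟩
      · exact absurd h hcAne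
      · rw [h]
        have hsum : (∑ a ∈ A.erase j, (a : ℕ)) + (j : ℕ) = ∑ a ∈ A, (a : ℕ) :=
          Finset.sum_erase_add A _ hjA
        have hlt : (i : ℕ) < (j : ℕ) := hij
        have hins : (∑ a ∈ insert i (A.erase j), (a : ℕ))
            = (i : ℕ) + ∑ a ∈ A.erase j, (a : ℕ) :=
          sum_insert (fun hmem => hiA (mem_of_mem_erase hmem))
        show (∑ a ∈ insert i (A.erase j), (a : ℕ)) < ∑ a ∈ A, (a : ℕ)
        omega
    have hsizedℬ : ∀ A ∈ ℬ, #A = k := by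
      intro A hA
      rcases mem_compression_cases (ne_of_lt hij) hA with ⟨h1, _⟩ | ⟨_, B, hB, hjB, hiB, rfl⟩
      · exact hsized A h1
      · rw [card_insert_of_notMem (fun hmem => hiB (mem_of_mem_erase hmem)),
          card_erase_of_mem hjB]
        have h2 := hsized B hB
        have : 0 < #B := card_pos.2 ⟨j, hjB⟩
        omega
    have hintℬ := int_compression hij hint
    calc #𝒜 = #ℬ := (UV.card_compression _ _ _).symm
      _ ≤ #(∂^[s] ℬ) := IH _ hmeas ℬ rfl hsizedℬ hintℬ
      _ ≤ #(∂^[s] 𝒜) := card_iterate_shadow_compression_le 𝒜 s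

/-! ### Kleitman side: diameter and down-compression -/

lemma compress_down {j : Fin n} (A : Finset (Fin n)) (h : j ∈ A) :
    compress ∅ {j} A = A.erase j := by
  rw [compress, if_pos ⟨disjoint_empty_left A, singleton_subset_iff.2 h⟩, sup_eq_union,
    union_empty, sdiff_singleton_eq_erase]

lemma compress_down_of_not_mem {j : Fin n} (A : Finset (Fin n)) (h : j ∉ A) :
    compress ∅ {j} A = A := by
  rw [compress, if_neg]
  rintro ⟨-, h2⟩
  exact h (singleton_subset_iff.1 h2)

lemma mem_down_cases {j : Fin n} {𝒜 : Finset (Finset (Fin n))} {X : Finset (Fin n)}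
    (hX : X ∈ 𝓒 ∅ {j} 𝒜) :
    (X ∈ 𝒜 ∧ compress ∅ {j} X ∈ 𝒜) ∨ (X ∉ 𝒜 ∧ ∃ B ∈ 𝒜, j ∈ B ∧ X = B.erase j) := by
  rw [mem_compression] at hX
  rcases hX with h | ⟨hX, B, hB, hcB⟩
  · exact Or.inl h
  · right
    refine ⟨hX, B, hB, ?_⟩
    by_cases hjB : j ∈ B
    · rw [compress_down B hjB] at hcB
      exact ⟨hjB, hcB.symm⟩
    · rw [compress_down_of_not_mem B hjB] at hcB
      exact absurd (hcB ▸ hB) hX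

lemma symmdiff_erase_right {X B : Finset (Fin n)} {j : Fin n} (hjX : j ∉ X) :
    X ∆ (B.erase j) = (X ∆ B).erase j := by
  ext a
  by_cases haj : a = j
  · subst haj
    simp [Finset.mem_symmDiff, hjX]
  · simp only [Finset.mem_symmDiff, Finset.mem_erase, haj, Ne, not_false_iff, true_and,
      not_and, false_implies]

lemma symmdiff_erase_mixed {X B : Finset (Fin n)} {j : Fin n} (hjX : j ∈ X) (hjB : j ∈ B) :
    X ∆ (B.erase j) = (X.erase j) ∆ B := by
  ext a
  by_cases haj : a = j
  · subst haj
    simp [Finset.mem_symmDiff, hjX, hjB]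
  · simp only [Finset.mem_symmDiff, Finset.mem_erase, haj, Ne, not_false_iff, true_and,
      not_and, false_implies]

lemma symmdiff_erase_both {A B : Finset (Fin n)} {j : Fin n} :
    (A.erase j) ∆ (B.erase j) = (A ∆ B).erase j := by
  ext a
  by_cases haj : a = j
  · subst haj
    simp [Finset.mem_symmDiff]
  · simp only [Finset.mem_symmDiff, Finset.mem_erase, haj, Ne, not_false_iff, true_and,
      not_and, false_implies]

lemma diam_down_compression {j : Fin n} {d : ℕ} {𝒜 : Finset (Finset (Fin n))}
    (h : ∀ A ∈ 𝒜, ∀ B ∈ 𝒜, #(A ∆ B) ≤ d) :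
    ∀ A ∈ 𝓒 ∅ {j} 𝒜, ∀ B ∈ 𝓒 ∅ {j} 𝒜, #(A ∆ B) ≤ d := by
  have key : ∀ X ∈ 𝒜, compress ∅ {j} X ∈ 𝒜 → ∀ B ∈ 𝒜, j ∈ B → #(X ∆ (B.erase j)) ≤ d := by
    intro X hX hcX B hB hjB
    by_cases hjX : j ∈ X
    · have hcX' : X.erase j ∈ 𝒜 := by
        rwa [compress_down X hjX] at hcX
      rw [symmdiff_erase_mixed hjX hjB]
      exact h _ hcX' B hB
    · rw [symmdiff_erase_right hjX]
      exact le_trans (card_erase_le) (h X hX B hB)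
  intro X hX Y hY
  rcases mem_down_cases hX with ⟨hX1, hX2⟩ | ⟨-, A, hA, hjA, rfl⟩ <;>
    rcases mem_down_cases hY with ⟨hY1, hY2⟩ | ⟨-, B, hB, hjB, rfl⟩
  · exact h X hX1 Y hY1
  · exact key X hX1 hX2 B hB hjB
  · rw [symmDiff_comm]
    exact key Y hY1 hY2 A hA hjA
  · rw [symmdiff_erase_both]
    exact le_trans (card_erase_le) (h A hA B hB)

lemma down_exists {d : ℕ} (𝒜 : Finset (Finset (Fin n)))
    (h : ∀ A ∈ 𝒜, ∀ B ∈ 𝒜, #(A ∆ B) ≤ d) :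
    ∃ 𝒟 : Finset (Finset (Fin n)), #𝒟 = #𝒜 ∧ (∀ A ∈ 𝒟, ∀ B ∈ 𝒟, #(A ∆ B) ≤ d) ∧
      ∀ A ∈ 𝒟, ∀ j ∈ A, A.erase j ∈ 𝒟 := by
  suffices H : ∀ μ : ℕ, ∀ 𝒜 : Finset (Finset (Fin n)), (∑ A ∈ 𝒜, #A) = μ →
      (∀ A ∈ 𝒜, ∀ B ∈ 𝒜, #(A ∆ B) ≤ d) →
      ∃ 𝒟 : Finset (Finset (Fin n)), #𝒟 = #𝒜 ∧ (∀ A ∈ 𝒟, ∀ B ∈ 𝒟, #(A ∆ B) ≤ d) ∧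
        ∀ A ∈ 𝒟, ∀ j ∈ A, A.erase j ∈ 𝒟 by
    exact H _ 𝒜 rfl h
  intro μ
  induction μ using Nat.strong_induction_on with
  | _ μ IH =>
  intro 𝒜 hμ hdiam
  by_cases hall : ∀ j : Fin n, 𝓒 ∅ {j} 𝒜 = 𝒜
  · refine ⟨𝒜, rfl, hdiam, ?_⟩
    intro A hA j hjA
    have hmem : compress ∅ {j} A ∈ 𝓒 ∅ {j} 𝒜 := compress_mem_compression hA
    rwa [compress_down A hjA, hall j] at hmem
  · push_neg at hall
    obtain ⟨j, hne⟩ := hall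
    have hmeas : (∑ A ∈ 𝓒 ∅ {j} 𝒜, #A) < μ := by
      rw [← hμ]
      apply sum_compression_lt _ _ hne
      intro A hA hcA
      have hcAne : compress ∅ {j} A ≠ A := fun hc => hcA (hc.symm ▸ hA)
      by_cases hjA : j ∈ A
      · rw [compress_down A hjA, card_erase_of_mem hjA]
        have : 0 < #A := card_pos.2 ⟨j, hjA⟩
        omega
      · exact absurd (compress_down_of_not_mem A hjA) hcAne
    obtain ⟨𝒟, h1, h2, h3⟩ := IH _ hmeas (𝓒 ∅ {j} 𝒜) rfl (diam_down_compression hdiam)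
    exact ⟨𝒟, h1.trans (UV.card_compression _ _ _), h2, h3⟩

lemma down_closed {𝒟 : Finset (Finset (Fin n))}
    (h : ∀ A ∈ 𝒟, ∀ j ∈ A, A.erase j ∈ 𝒟) :
    ∀ A ∈ 𝒟, ∀ B ⊆ A, B ∈ 𝒟 := by
  suffices H : ∀ m : ℕ, ∀ A ∈ 𝒟, ∀ B ⊆ A, #(A \ B) = m → B ∈ 𝒟 by
    intro A hA B hBA
    exact H _ A hA B hBA rfl
  intro m
  induction m with
  | zero =>
    intro A hA B hBA hm
    have : A ⊆ B := by
      intro a haA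
      by_contra haB
      have : a ∈ A \ B := mem_sdiff.2 ⟨haA, haB⟩
      rw [card_eq_zero] at hm
      simp [hm] at this
    rw [Finset.Subset.antisymm hBA this]
    exact hA
  | succ m ih =>
    intro A hA B hBA hm
    have hne : (A \ B).Nonempty := by
      rw [← card_pos]
      omega
    obtain ⟨j, hj⟩ := hne
    have hjA : j ∈ A := (mem_sdiff.1 hj).1
    have hjB : j ∉ B := (mem_sdiff.1 hj).2
    refine ih (A.erase j) (h A hA j hjA) B ?_ ?_
    · intro b hb
      exact mem_erase.2 ⟨fun hbj => hjB (hbj ▸ hb), hBA hb⟩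
    · have : A.erase j \ B = (A \ B).erase j := by
        ext a
        simp only [mem_sdiff, mem_erase]
        tauto
      rw [this, card_erase_of_mem hj]
      omega

lemma union_bound {d : ℕ} {𝒟 : Finset (Finset (Fin n))}
    (hdiam : ∀ A ∈ 𝒟, ∀ B ∈ 𝒟, #(A ∆ B) ≤ d)
    (hdown : ∀ A ∈ 𝒟, ∀ B ⊆ A, B ∈ 𝒟) :
    ∀ A ∈ 𝒟, ∀ B ∈ 𝒟, #(A ∪ B) ≤ d := by
  intro A hA B hB
  have hBA : B \ A ∈ 𝒟 := hdown B hB (B \ A) sdiff_subset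
  have hdisj : Disjoint A (B \ A) := disjoint_sdiff
  have := hdiam A hA (B \ A) hBA
  rwa [hdisj.symmDiff_eq_sup, sup_eq_union, union_sdiff_self_eq_union] at this

/-! ### level counting -/

lemma pair_bound {t : ℕ} (ht : 1 ≤ t) (hn : 2 * t + 1 < n) {𝒟 : Finset (Finset (Fin n))}
    (hunion : ∀ A ∈ 𝒟, ∀ B ∈ 𝒟, #(A ∪ B) ≤ 2 * t + 1) {i : ℕ} (hi1 : 1 ≤ i) (hit : i ≤ t) :
    #(𝒟.filter fun A => #A = 2 * t + 2 - i) + #(𝒟.filter fun A => #A = i) ≤ n.choose i := by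
  classical
  set ℓ := 2 * t + 2 - i with hℓ
  set 𝒳 := 𝒟.filter (fun A => #A = ℓ) with h𝒳
  set 𝒴 := 𝒟.filter (fun A => #A = i) with h𝒴
  set 𝒞 := 𝒳.image compl with h𝒞
  have hℓ1 : t + 2 ≤ ℓ := by omega
  have hℓ2 : ℓ ≤ 2 * t + 1 := by omega
  have hcard𝒞 : #𝒞 = #𝒳 := card_image_of_injective _ compl_injective
  have hsized : ∀ A ∈ 𝒞, #A = n - ℓ := by
    intro A hA
    obtain ⟨X, hX, rfl⟩ := mem_image.1 hA
    rw [card_compl, Fintype.card_fin, (mem_filter.1 hX).2]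
  have hint : ∀ A ∈ 𝒞, ∀ B ∈ 𝒞, n - (2 * t + 2) ≤ #(A ∩ B) := by
    intro A hA B hB
    obtain ⟨X, hX, rfl⟩ := mem_image.1 hA
    obtain ⟨Y, hY, rfl⟩ := mem_image.1 hB
    have hhh := hunion X (mem_filter.1 hX).1 Y (mem_filter.1 hY).1
    have hXY : Xᶜ ∩ Yᶜ = (X ∪ Y)ᶜ := (compl_union X Y).symm
    rw [hXY, card_compl, Fintype.card_fin]
    omega
  have hkat := katona 𝒞 hsized hint (by omega) (by omega)
  have hshadow : ∂^[n - (2 * t + 2)] 𝒞 ⊆ (powersetCard i (univ : Finset (Fin n))) \ 𝒴 := by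
    intro B hB
    obtain ⟨Cc, hCc, hBC, hcard⟩ := mem_shadow_iterate_iff_exists_sdiff.1 hB
    obtain ⟨X, hX, rfl⟩ := mem_image.1 hCc
    have hXc : #X = ℓ := (mem_filter.1 hX).2
    have hXD : X ∈ 𝒟 := (mem_filter.1 hX).1
    have hBcard : #B = i := by
      have h1 : #(Xᶜ) = n - ℓ := by rw [card_compl, Fintype.card_fin, hXc]
      have h2 : #(Xᶜ \ B) = #(Xᶜ) - #B := card_sdiff_of_subset hBC
      have h3 : #B ≤ #(Xᶜ) := card_le_card hBC
      omega
    rw [mem_sdiff, mem_powersetCard]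
    refine ⟨⟨subset_univ B, hBcard⟩, ?_⟩
    intro hBY
    have hBD : B ∈ 𝒟 := (mem_filter.1 hBY).1
    have hdisj : Disjoint X B := by
      rw [Finset.disjoint_left]
      intro a haX haB
      have := hBC haB
      rw [mem_compl] at this
      exact this haX
    have hu := hunion X hXD B hBD
    rw [card_union_of_disjoint hdisj, hXc, hBcard] at hu
    omega
  have h𝒴sub : 𝒴 ⊆ powersetCard i (univ : Finset (Fin n)) := by
    intro A hA
    rw [mem_powersetCard]
    exact ⟨subset_univ _, (mem_filter.1 hA).2⟩
  have hfinal : #(∂^[n - (2 * t + 2)] 𝒞) ≤ #(powersetCard i (univ : Finset (Fin n))) - #𝒴 := by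
    calc #(∂^[n - (2 * t + 2)] 𝒞) ≤ #((powersetCard i (univ : Finset (Fin n))) \ 𝒴) :=
        card_le_card hshadow
      _ = #(powersetCard i (univ : Finset (Fin n))) - #𝒴 := card_sdiff_of_subset h𝒴sub
  have hpc : #(powersetCard i (univ : Finset (Fin n))) = n.choose i := by
    rw [card_powersetCard, card_univ, Fintype.card_fin]
  have h𝒴le := card_le_card h𝒴sub
  omega

lemma ekr_bound {t : ℕ} (hn : 2 * t + 1 < n) {𝒟 : Finset (Finset (Fin n))}
    (hunion : ∀ A ∈ 𝒟, ∀ B ∈ 𝒟, #(A ∪ B) ≤ 2 * t + 1) :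
    #(𝒟.filter fun A => #A = t + 1) ≤ (n - 1).choose t := by
  classical
  have h1 : ((𝒟.filter fun A => #A = t + 1 : Finset (Finset (Fin n))) :
      Set (Finset (Fin n))).Intersecting := by
    intro A hA B hB hdisj
    rw [mem_coe, mem_filter] at hA hB
    have := hunion A hA.1 B hB.1
    rw [card_union_of_disjoint hdisj, hA.2, hB.2] at this
    omega
  have h2 : ((𝒟.filter fun A => #A = t + 1 : Finset (Finset (Fin n))) :
      Set (Finset (Fin n))).Sized (t + 1) := by
    intro A hA
    rw [mem_coe, mem_filter] at hA
    exact hA.2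
  have h3 : t + 1 ≤ n / 2 := by omega
  have := Finset.erdos_ko_rado h1 h2 h3
  simpa using this

lemma sum_choose_succ (m t : ℕ) :
    (∑ i ∈ range (t + 1), (m + 1).choose i) + m.choose t
      = 2 * ∑ i ∈ range (t + 1), m.choose i := by
  induction t with
  | zero => simp
  | succ t ih =>
    rw [sum_range_succ, sum_range_succ (f := fun i => m.choose i)]
    have hcs : (m + 1).choose (t + 1) = m.choose t + m.choose (t + 1) :=
      Nat.choose_succ_succ m t
    omega

theorem kleitman_sets {t : ℕ} (ht : 0 < t) (hn : 2 * t + 1 < n)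
    (𝒜 : Finset (Finset (Fin n)))
    (h : ∀ A ∈ 𝒜, ∀ B ∈ 𝒜, #(A ∆ B) ≤ 2 * t + 1) :
    𝒜.card ≤ 2 * ∑ i ∈ range (t + 1), (n - 1).choose i := by
  classical
  obtain ⟨𝒟, hcard, hdiam, herase⟩ := down_exists 𝒜 h
  have hdown := down_closed herase
  have hunion := union_bound hdiam hdown
  rw [← hcard]
  have hmem : ∀ A ∈ 𝒟, #A ∈ range (2 * t + 2) := by
    intro A hA
    rw [mem_range]
    have := hunion A hA A hA
    rw [union_self] at this
    omega
  have hfib : #𝒟 = ∑ i ∈ range (2 * t + 2), #(𝒟.filter fun A => #A = i) :=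
    card_eq_sum_card_fiberwise hmem
  have e0 : #(𝒟.filter fun A => #A = 0) ≤ 1 := by
    rw [← card_singleton (∅ : Finset (Fin n))]
    apply card_le_card
    intro A hA
    rw [mem_filter] at hA
    rw [mem_singleton, ← card_eq_zero.1 hA.2]
  have ekr := ekr_bound hn hunion
  have epair : ∀ i ∈ Finset.Ico 1 (t + 1),
      #(𝒟.filter fun A => #A = i) + #(𝒟.filter fun A => #A = 2 * t + 2 - i) ≤ n.choose i := by
    intro i hi
    rw [mem_Ico] at hi
    have := pair_bound ht hn hunion hi.1 (by omega)
    omega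
  -- sum splitting
  have hs1 : ∑ i ∈ range (2 * t + 2), #(𝒟.filter fun A => #A = i)
      = (∑ i ∈ Finset.Ico 0 (t + 1), #(𝒟.filter fun A => #A = i))
        + #(𝒟.filter fun A => #A = t + 1)
        + ∑ i ∈ Finset.Ico (t + 2) (2 * t + 2), #(𝒟.filter fun A => #A = i) := by
    rw [range_eq_Ico,
      ← Finset.sum_Ico_consecutive (fun i => #(𝒟.filter fun A => #A = i))
        (by omega : (0 : ℕ) ≤ t + 2) (by omega : t + 2 ≤ 2 * t + 2),
      Finset.sum_Ico_succ_top (by omega : (0 : ℕ) ≤ t + 1)]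
  have hs2 : ∑ i ∈ Finset.Ico 0 (t + 1), #(𝒟.filter fun A => #A = i)
      = #(𝒟.filter fun A => #A = 0)
        + ∑ i ∈ Finset.Ico 1 (t + 1), #(𝒟.filter fun A => #A = i) := by
    rw [← Finset.sum_Ico_consecutive (fun i => #(𝒟.filter fun A => #A = i))
      (by omega : (0 : ℕ) ≤ 1) (by omega : 1 ≤ t + 1), Nat.Ico_zero_eq_range,
      Finset.sum_range_one]
  have hs3 : ∑ i ∈ Finset.Ico (t + 2) (2 * t + 2), #(𝒟.filter fun A => #A = i)
      = ∑ i ∈ Finset.Ico 1 (t + 1), #(𝒟.filter fun A => #A = 2 * t + 2 - i) := by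
    apply Finset.sum_nbij' (i := fun a => 2 * t + 2 - a) (j := fun a => 2 * t + 2 - a)
    · intro a ha
      rw [mem_Ico] at ha ⊢
      omega
    · intro a ha
      rw [mem_Ico] at ha ⊢
      omega
    · intro a ha
      rw [mem_Ico] at ha
      omega
    · intro a ha
      rw [mem_Ico] at ha
      omega
    · intro a ha
      rw [mem_Ico] at ha
      rw [show 2 * t + 2 - (2 * t + 2 - a) = a from by omega]
  have hpair : (∑ i ∈ Finset.Ico 1 (t + 1), #(𝒟.filter fun A => #A = i))
      + (∑ i ∈ Finset.Ico 1 (t + 1), #(𝒟.filter fun A => #A = 2 * t + 2 - i))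
      ≤ ∑ i ∈ Finset.Ico 1 (t + 1), n.choose i := by
    rw [← Finset.sum_add_distrib]
    exact Finset.sum_le_sum epair
  have hrange : ∑ i ∈ range (t + 1), n.choose i
      = n.choose 0 + ∑ i ∈ Finset.Ico 1 (t + 1), n.choose i := by
    rw [range_eq_Ico,
      ← Finset.sum_Ico_consecutive (fun i => n.choose i)
        (by omega : (0 : ℕ) ≤ 1) (by omega : 1 ≤ t + 1), Nat.Ico_zero_eq_range,
      Finset.sum_range_one]
  have hid : (∑ i ∈ range (t + 1), n.choose i) + (n - 1).choose t
      = 2 * ∑ i ∈ range (t + 1), (n - 1).choose i := by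
    have hn1 : n - 1 + 1 = n := by omega
    have := sum_choose_succ (n - 1) t
    rw [hn1] at this
    omega
  have hchoose0 : n.choose 0 = 1 := Nat.choose_zero_right n
  omega

end KleitmanAux

theorem kleitman_odd (n t : ℕ) (ht : 0 < t) (hn : 2 * t + 1 < n)
    (F : Finset (Fin n → Bool))
    (hF : ∀ x ∈ F, ∀ y ∈ F, hammingDist x y ≤ 2 * t + 1) :
    F.card ≤ 2 * ∑ i ∈ Finset.range (t + 1), (n - 1).choose i := by
  classical
  set f : (Fin n → Bool) → Finset (Fin n) := fun x => Finset.univ.filter (fun i => x i = true)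
    with hf
  have hinj : Function.Injective f := by
    intro x y hxy
    funext i
    have := Finset.ext_iff.1 hxy i
    simp only [hf, Finset.mem_filter, Finset.mem_univ, true_and] at this
    cases hx : x i <;> cases hy : y i <;> simp_all
  have hdist : ∀ x y : Fin n → Bool, #(f x ∆ f y) = hammingDist x y := by
    intro x y
    unfold hammingDist
    congr 1
    ext i
    simp only [hf, Finset.mem_symmDiff, Finset.mem_filter, Finset.mem_univ, true_and,
      Finset.mem_filter]
    cases hx : x i <;> cases hy : y i <;> simp
  have hcard : #(F.image f) = #F := Finset.card_image_of_injective _ hinj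
  rw [← hcard]
  apply KleitmanAux.kleitman_sets ht hn
  intro A hA B hB
  simp only [Finset.mem_image] at hA hB
  obtain ⟨x, hx, rfl⟩ := hA
  obtain ⟨y, hy, rfl⟩ := hB
  rw [hdist]
  exact hF x hx y hy
end

section
/- Let t be a positive integer and n ≥ 2t+1. If F ⊆ {0,1}^n has all pairwise Hamming distances at most 2t, then |F| ≤ 2 Σ_{i=0}^{t} C(n,i). -/
namespace KleitmanCLP

open Finset

variable (n t : ℕ)

/-- indicator of a Bool in `ZMod 2` -/
def χ (b : Bool) : ZMod 2 := if b then 1 else 0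

/-- monomial evaluation -/
def X (x : Fin n → Bool) (A : Finset (Fin n)) : ZMod 2 := ∏ i ∈ A, χ (x i)

/-- pairs of disjoint sets with small total size -/
def P : Finset (Finset (Fin n) × Finset (Fin n)) :=
  (univ ×ˢ univ).filter fun p => Disjoint p.1 p.2 ∧ p.1.card + p.2.card ≤ 2 * t

/-- sets of size ≤ t -/
def A' : Finset (Finset (Fin n)) := univ.filter fun A => A.card ≤ t

/-- the CLP function -/
def Φ (x y : Fin n → Bool) : ZMod 2 := ∑ p ∈ P n t, X n x p.1 * X n y p.2

def u (A : Finset (Fin n)) (y : Fin n → Bool) : ZMod 2 :=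
  ∑ B ∈ univ.filter (fun B => Disjoint A B ∧ A.card + B.card ≤ 2 * t), X n y B

def w (B : Finset (Fin n)) (x : Fin n → Bool) : ZMod 2 :=
  ∑ A ∈ univ.filter (fun A => Disjoint A B ∧ A.card + B.card ≤ 2 * t ∧ t < A.card), X n x A

lemma split (x y : Fin n → Bool) :
    Φ n t x y = ∑ A ∈ A' n t, X n x A * u n t A y + ∑ B ∈ A' n t, w n t B x * X n y B := by
  classical
  rw [Φ, ← sum_filter_add_sum_filter_not (P n t) (fun p => p.1.card ≤ t)]
  congr 1
  · rw [sum_finset_product ((P n t).filter fun p => p.1.card ≤ t) (A' n t)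
      (fun A => univ.filter (fun B => Disjoint A B ∧ A.card + B.card ≤ 2 * t))
      (by intro p; simp [P, A', mem_filter]; tauto)]
    simp only [u, mul_sum]
  · rw [sum_finset_product_right ((P n t).filter fun p => ¬ p.1.card ≤ t) (A' n t)
      (fun B => univ.filter (fun A => Disjoint A B ∧ A.card + B.card ≤ 2 * t ∧ t < A.card))
      (by intro p; simp only [P, A', mem_filter, mem_product, mem_univ, true_and, not_le]
          constructor
          · rintro ⟨⟨hd, hc⟩, ht⟩; exact ⟨by omega, hd, hc, ht⟩
          · rintro ⟨hB, hd, hc, ht⟩; exact ⟨⟨hd, hc⟩, ht⟩)]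
    simp only [w, sum_mul]

lemma chi_add (a b : Bool) : χ a + χ b = if a ≠ b then 1 else 0 := by
  cases a <;> cases b <;> simp [χ] <;> decide

lemma eval (x y : Fin n → Bool) (h : hammingDist x y ≤ 2 * t) :
    Φ n t x y = if x = y then 1 else 0 := by
  classical
  -- rewrite Φ as a sum over subsets S of card ≤ 2t of ∏ (χ x i + χ y i)
  have key : Φ n t x y
      = ∑ S ∈ univ.filter (fun S : Finset (Fin n) => S.card ≤ 2 * t),
          ∏ i ∈ S, (χ (x i) + χ (y i)) := by
    rw [Φ]
    have : ∀ S ∈ univ.filter (fun S : Finset (Fin n) => S.card ≤ 2 * t),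
        ∏ i ∈ S, (χ (x i) + χ (y i))
          = ∑ A ∈ S.powerset, X n x A * X n y (S \ A) := by
      intro S _
      rw [prod_add]; rfl
    rw [sum_congr rfl this, sum_sigma']
    refine (sum_nbij' (s := P n t)
      (i := fun (p : Finset (Fin n) × Finset (Fin n)) =>
        (⟨p.1 ∪ p.2, p.1⟩ : Σ _ : Finset (Fin n), Finset (Fin n)))
      (j := fun (q : Σ _ : Finset (Fin n), Finset (Fin n)) => (q.2, q.1 \ q.2))
      ?_ ?_ ?_ ?_ ?_)
    · rintro ⟨a, b⟩ hp
      simp only [P, mem_filter, mem_product, mem_univ, true_and] at hp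
      simp only [mem_sigma, mem_filter, mem_univ, true_and, mem_powerset]
      exact ⟨by rw [card_union_of_disjoint hp.1]; exact hp.2, subset_union_left⟩
    · rintro ⟨S, A⟩ hq
      simp only [mem_sigma, mem_filter, mem_univ, true_and, mem_powerset] at hq
      simp only [P, mem_filter, mem_product, mem_univ, true_and]
      refine ⟨disjoint_sdiff, ?_⟩
      have := card_sdiff_add_card_eq_card hq.2
      omega
    · rintro ⟨a, b⟩ hp
      simp only [P, mem_filter, mem_product, mem_univ, true_and] at hp
      simp [union_sdiff_cancel_left hp.1]
    · rintro ⟨S, A⟩ hq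
      simp only [mem_sigma, mem_filter, mem_univ, true_and, mem_powerset] at hq
      simp [union_sdiff_of_subset hq.2]
    · rintro ⟨a, b⟩ hp
      simp only [P, mem_filter, mem_product, mem_univ, true_and] at hp
      simp [union_sdiff_cancel_left hp.1]
  rw [key]
  have hD : ∀ S : Finset (Fin n), ∏ i ∈ S, (χ (x i) + χ (y i))
      = if S ⊆ univ.filter (fun i => x i ≠ y i) then 1 else 0 := by
    intro S
    have : ∀ i ∈ S, χ (x i) + χ (y i) = if x i ≠ y i then (1 : ZMod 2) else 0 := by
      intro i _; exact chi_add _ _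
    rw [prod_congr rfl this, prod_boole]
    congr 1
    simp [Finset.subset_iff]
  rw [sum_congr rfl (fun S _ => hD S), sum_boole]
  have hfil : ((univ.filter (fun S : Finset (Fin n) => S.card ≤ 2 * t)).filter
      (fun S => S ⊆ univ.filter (fun i => x i ≠ y i)))
      = (univ.filter (fun i => x i ≠ y i)).powerset := by
    ext S
    simp only [mem_filter, mem_univ, true_and, mem_powerset]
    constructor
    · tauto
    · intro hS
      refine ⟨le_trans (card_le_card hS) ?_, hS⟩
      exact le_trans (le_of_eq rfl) h
  rw [hfil, card_powerset]
  by_cases hxy : x = y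
  · subst hxy
    simp
  · have hne : (univ.filter (fun i => x i ≠ y i)).Nonempty := by
      rw [filter_nonempty_iff]
      by_contra hc
      push_neg at hc
      exact hxy (funext fun i => hc i (mem_univ i))
    have hk : (univ.filter (fun i => x i ≠ y i)).card ≠ 0 := by
      simpa [card_eq_zero, ← Finset.nonempty_iff_ne_empty] using hne.ne_empty
    simp only [if_neg hxy]
    push_cast
    rw [show ((2 : ZMod 2)) = 0 from rfl, zero_pow hk]

lemma card_A' : (A' n t).card = ∑ i ∈ range (t + 1), n.choose i := by
  classical
  have hA : A' n t = (range (t + 1)).biUnion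
      (fun i => powersetCard i (univ : Finset (Fin n))) := by
    ext A
    simp only [A', mem_filter, mem_univ, true_and, mem_biUnion, mem_range,
      mem_powersetCard, Nat.lt_succ_iff]
    constructor
    · intro h; exact ⟨A.card, h, subset_univ A, rfl⟩
    · rintro ⟨i, hi, -, rfl⟩; exact hi
  rw [hA, card_biUnion]
  · refine sum_congr rfl fun i _ => ?_
    rw [card_powersetCard, card_univ, Fintype.card_fin]
  · intro i _ j _ hij
    simp only [Finset.disjoint_left, mem_powersetCard]
    rintro A ⟨-, rfl⟩ ⟨-, hj⟩
    exact hij hj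

end KleitmanCLP

open KleitmanCLP Finset in
theorem kleitman_weak_clp (n t : ℕ) (ht : 0 < t) (hn : 2 * t + 1 ≤ n)
    (F : Finset (Fin n → Bool))
    (hF : ∀ x ∈ F, ∀ y ∈ F, hammingDist x y ≤ 2 * t) :
    F.card ≤ 2 * ∑ i ∈ Finset.range (t + 1), n.choose i := by
  classical
  set G : Finset ((Fin n → Bool) → ZMod 2) :=
    ((A' n t).image fun A => u n t A) ∪ ((A' n t).image fun B => fun y => X n y B) with hG
  set W := Submodule.span (ZMod 2) (G : Set ((Fin n → Bool) → ZMod 2)) with hW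
  have hmem : ∀ x : Fin n → Bool, (fun y => Φ n t x y) ∈ W := by
    intro x
    have heq : (fun y => Φ n t x y)
        = (∑ A ∈ A' n t, X n x A • (u n t A))
          + ∑ B ∈ A' n t, w n t B x • (fun y => X n y B) := by
      funext y
      simp only [Pi.add_apply, Finset.sum_apply, Pi.smul_apply, smul_eq_mul]
      exact split n t x y
    rw [heq]
    refine Submodule.add_mem _
      (Submodule.sum_mem _ fun A hA => Submodule.smul_mem _ _ (Submodule.subset_span ?_))
      (Submodule.sum_mem _ fun B hB => Submodule.smul_mem _ _ (Submodule.subset_span ?_))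
    · exact mem_union_left _ (mem_image_of_mem _ hA)
    · exact mem_union_right _ (mem_image_of_mem _ hB)
  have hli : LinearIndependent (ZMod 2)
      (fun x : ↥F => fun y => Φ n t (x : Fin n → Bool) y) := by
    rw [Fintype.linearIndependent_iff]
    intro g hg x
    have hgx := congrFun hg (x : Fin n → Bool)
    simp only [Finset.sum_apply, Pi.smul_apply, smul_eq_mul, Pi.zero_apply] at hgx
    have h1 : ∀ z : ↥F, g z * Φ n t ↑z ↑x = if z = x then g z else 0 := by
      intro z
      rw [eval n t ↑z ↑x (hF _ z.2 _ x.2)]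
      by_cases hz : (z : Fin n → Bool) = (x : Fin n → Bool)
      · simp [hz, Subtype.ext hz]
      · rw [if_neg hz, if_neg (fun hzx => hz (by rw [hzx])), mul_zero]
    rw [Fintype.sum_congr _ _ h1, Finset.sum_ite_eq' Finset.univ x g,
      if_pos (Finset.mem_univ x)] at hgx
    exact hgx
  let v : ↥F → W := fun x => ⟨fun y => Φ n t ↑x y, hmem ↑x⟩
  have hliv : LinearIndependent (ZMod 2) v :=
    LinearIndependent.of_comp W.subtype hli
  have h1 : Fintype.card ↥F ≤ Module.finrank (ZMod 2) W :=
    hliv.fintype_card_le_finrank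
  have h2 : Module.finrank (ZMod 2) W ≤ G.card :=
    finrank_span_finset_le_card G
  have h3 : G.card ≤ (A' n t).card + (A' n t).card :=
    le_trans (card_union_le _ _) (add_le_add (card_image_le) (card_image_le))
  have h4 := card_A' n t
  have h5 : F.card = Fintype.card ↥F := (Fintype.card_coe F).symm
  rw [h5]
  have : 2 * ∑ i ∈ Finset.range (t + 1), n.choose i
      = (A' n t).card + (A' n t).card := by rw [h4]; ring
  omega
end

section
/- Let P ∈ F_2[x_1,...,x_n] be a multilinear polynomial of degree at most d, and let M be the 2^n × 2^n matrix over F_2 with entries M_{x,y} = P(x+y) for x, y ∈ F_2^n. Then the F_2-rank of M is at most 2 Σ_{i=0}^{⌊d/2⌋} C(n,i). -/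
/-!
Expanding each multilinear monomial, `P (x + y)` is a sum of terms `c · x^S · y^(T \ S)` with
`S ⊆ T` and `#T ≤ d`, so `#S ≤ d / 2` or `#(T \ S) ≤ d / 2`. Grouping the terms of the first kind by
`S` and the others by `T \ S` writes `M` as `F₁ G₁ + F₂ G₂` with inner dimension the number of
subsets of size at most `d / 2`.
-/

open Finset

namespace Matrix

variable {X Y K : Type*} [Fintype Y] [Field K]

theorem rank_add_le (A B : Matrix X Y K) : (A + B).rank ≤ A.rank + B.rank := by
  unfold Matrix.rank
  rw [mulVecLin_add]
  refine (Submodule.finrank_mono ?_).trans (Submodule.finrank_add_le_finrank_add_finrank _ _)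
  rintro _ ⟨v, rfl⟩
  exact Submodule.add_mem_sup (LinearMap.mem_range_self _ v) (LinearMap.mem_range_self _ v)

theorem rank_le_card_of_eq_sum_mul {α : Type*} (M : Matrix X Y K) (A : Finset α)
    (f : α → X → K) (g : α → Y → K) (hM : ∀ x y, M x y = ∑ a ∈ A, f a x * g a y) :
    M.rank ≤ #A := by
  have hfactor : M = (of fun x (a : A) => f a x) * of fun (a : A) y => g a y := by
    ext x y
    rw [hM, mul_apply, ← Finset.sum_coe_sort A]
    rfl
  rw [hfactor]
  exact (rank_mul_le_left _ _).trans ((rank_le_card_width _).trans (Fintype.card_coe A).le)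

theorem rank_le_card_of_eq_sum_fiberwise {κ α : Type*} [DecidableEq α] (M : Matrix X Y K)
    (s : Finset κ) (A : Finset α) (l : κ → α) (hl : ∀ j ∈ s, l j ∈ A)
    (f : α → X → K) (g : κ → Y → K) (hM : ∀ x y, M x y = ∑ j ∈ s, f (l j) x * g j y) :
    M.rank ≤ #A := by
  refine rank_le_card_of_eq_sum_mul M A f (fun a y => ∑ j ∈ s with l j = a, g j y) fun x y => ?_
  rw [hM, ← Finset.sum_fiberwise_of_maps_to hl]
  refine Finset.sum_congr rfl fun a _ => ?_
  rw [Finset.mul_sum]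
  exact Finset.sum_congr rfl fun j hj => by rw [(Finset.mem_filter.1 hj).2]

theorem rank_le_two_mul_card_of_eq_sum [Fintype X] {κ α : Type*} (M : Matrix X Y K)
    (s : Finset κ) (A : Finset α) (l r : κ → α) (hlr : ∀ j ∈ s, l j ∈ A ∨ r j ∈ A)
    (c : κ → K) (f : α → X → K) (g : α → Y → K)
    (hM : ∀ x y, M x y = ∑ j ∈ s, c j * f (l j) x * g (r j) y) :
    M.rank ≤ 2 * #A := by
  classical
  let L : Matrix X Y K := of fun x y => ∑ j ∈ s with l j ∈ A, f (l j) x * (c j * g (r j) y)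
  let R : Matrix Y X K := of fun y x => ∑ j ∈ s with l j ∉ A, g (r j) y * (c j * f (l j) x)
  have hsplit : M = L + Rᵀ := by
    ext x y
    simp only [hM, L, R, add_apply, transpose_apply, of_apply]
    rw [← Finset.sum_filter_add_sum_filter_not s (fun j => l j ∈ A)]
    congr 1 <;> refine Finset.sum_congr rfl fun j _ => by ring
  have hL : L.rank ≤ #A := rank_le_card_of_eq_sum_fiberwise L _ A l
    (fun j hj => (Finset.mem_filter.1 hj).2) f _ fun _ _ => rfl
  have hR : R.rank ≤ #A := rank_le_card_of_eq_sum_fiberwise R _ A r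
    (fun j hj => (hlr j (Finset.mem_filter.1 hj).1).resolve_left (Finset.mem_filter.1 hj).2)
    g _ fun _ _ => rfl
  calc M.rank ≤ L.rank + Rᵀ.rank := hsplit ▸ rank_add_le L Rᵀ
    _ ≤ 2 * #A := by rw [rank_transpose]; omega

end Matrix

theorem Finset.card_filter_card_le (ι : Type*) [Fintype ι] (k : ℕ) :
    #{S : Finset ι | #S ≤ k} = ∑ i ∈ range (k + 1), (Fintype.card ι).choose i := by
  classical
  rw [card_eq_sum_card_fiberwise (f := card) (t := range (k + 1))
    (fun S hS => mem_range_succ_iff.2 (mem_filter.1 hS).2)]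
  refine sum_congr rfl fun i hi => ?_
  rw [← card_univ, ← card_powersetCard]
  congr 1
  ext S
  simp only [mem_filter, mem_univ, true_and, mem_powersetCard_univ]
  have := mem_range_succ_iff.1 hi
  omega

namespace MvPolynomial

variable {ι R : Type*} [CommSemiring R]

theorem eval_eq_sum_prod_support_of_le_one {P : MvPolynomial ι R}
    (hP : ∀ m ∈ P.support, ∀ i, m i ≤ 1) (x : ι → R) :
    eval x P = ∑ m ∈ P.support, P.coeff m * ∏ i ∈ m.support, x i := by
  rw [eval_eq]
  refine sum_congr rfl fun m hm => congrArg _ (prod_congr rfl fun i hi => ?_)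
  rw [le_antisymm (hP m hm i) (Nat.one_le_iff_ne_zero.2 (Finsupp.mem_support_iff.1 hi)), pow_one]

theorem eval_add_eq_sum_sigma_powerset_of_le_one [DecidableEq ι] {P : MvPolynomial ι R}
    (hP : ∀ m ∈ P.support, ∀ i, m i ≤ 1) (x y : ι → R) :
    eval (x + y) P = ∑ j ∈ P.support.sigma fun m => m.support.powerset,
      P.coeff j.1 * (∏ i ∈ j.2, x i) * ∏ i ∈ j.1.support \ j.2, y i := by
  rw [eval_eq_sum_prod_support_of_le_one hP, sum_sigma]
  refine sum_congr rfl fun m _ => ?_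
  simp only [Pi.add_apply]
  rw [prod_add, mul_sum]
  simp only [mul_assoc]

theorem card_support_le_totalDegree {P : MvPolynomial ι R} {m : ι →₀ ℕ} (hm : m ∈ P.support) :
    #m.support ≤ P.totalDegree :=
  calc #m.support = ∑ _ ∈ m.support, 1 := card_eq_sum_ones _
    _ ≤ m.sum fun _ e => e :=
      sum_le_sum fun _ hi => Nat.one_le_iff_ne_zero.2 (Finsupp.mem_support_iff.1 hi)
    _ ≤ P.totalDegree := le_totalDegree hm

end MvPolynomial

open MvPolynomial in
theorem rank_eval_add_le {ι K : Type*} [Fintype ι] [DecidableEq ι] [Field K] [Fintype K] {d : ℕ}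
    {P : MvPolynomial ι K}
    (hP : ∀ m ∈ P.support, ∀ i, m i ≤ 1) (hd : P.totalDegree ≤ d)
    (M : Matrix (ι → K) (ι → K) K) (hM : ∀ x y, M x y = eval (x + y) P) :
    M.rank ≤ 2 * #{S : Finset ι | #S ≤ d / 2} := by
  refine M.rank_le_two_mul_card_of_eq_sum _ _ Sigma.snd (fun j => j.1.support \ j.2) ?_
    (fun j : (_ : ι →₀ ℕ) × Finset ι => P.coeff j.1) (fun S x => ∏ i ∈ S, x i)
    (fun S y => ∏ i ∈ S, y i)
    fun x y => (hM x y).trans (eval_add_eq_sum_sigma_powerset_of_le_one hP x y)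
  rintro ⟨m, S⟩ hj
  simp only [mem_sigma, mem_powerset] at hj
  obtain ⟨hm, hS⟩ := hj
  have hT : #m.support ≤ d := (card_support_le_totalDegree hm).trans hd
  have hcompl : #(m.support \ S) = #m.support - #S := card_sdiff_of_subset hS
  simp only [mem_filter, mem_univ, true_and]
  omega

theorem croot_lev_pach (n d : ℕ) (P : MvPolynomial (Fin n) (ZMod 2))
    (hmult : ∀ m ∈ P.support, ∀ i : Fin n, m i ≤ 1)
    (hdeg : P.totalDegree ≤ d)
    (M : Matrix (Fin n → ZMod 2) (Fin n → ZMod 2) (ZMod 2))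
    (hM : ∀ x y : Fin n → ZMod 2, M x y = MvPolynomial.eval (x + y) P) :
    M.rank ≤ 2 * ∑ i ∈ Finset.range (d / 2 + 1), n.choose i := by
  simpa only [card_filter_card_le, Fintype.card_fin] using rank_eval_add_le hmult hdeg M hM
end

section
/- For integers t > s ≥ 0 and all n, if F is a collection of binary vectors in {0,1}^n such that for every two distinct x, y ∈ F the Hamming distance d(x,y) lies in {2s+1, 2s+2, ..., 2t}, then |F| ≤ C(n, t-s) + 2C(n, t-s-1) + 2C(n, t-s-2) + ... + 2C(n, 0). -/
open Finset

namespace Kleitman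

variable {m : ℕ}

def wt (x : Fin m → Bool) : ℕ := #{j | x j = true}

lemma hammingDist_eq_sum (x y : Fin m → Bool) :
    hammingDist x y = ∑ j, (if x j ≠ y j then 1 else 0) := by
  rw [hammingDist, Finset.card_filter]

lemma wt_eq_sum (x : Fin m → Bool) : wt x = ∑ j, (if x j = true then 1 else 0) := by
  rw [wt, Finset.card_filter]

lemma hammingDist_snoc (x y : Fin m → Bool) (a b : Bool) :
    hammingDist (Fin.snoc x a : Fin (m+1) → Bool) (Fin.snoc y b)
      = hammingDist x y + (if a ≠ b then 1 else 0) := by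
  simp [hammingDist_eq_sum, Fin.sum_univ_castSucc]

lemma parity_key (x y : Fin m → Bool) :
    hammingDist x y % 2 = (wt x + wt y) % 2 := by
  have : ((hammingDist x y : ℕ) : ZMod 2) = ((wt x + wt y : ℕ) : ZMod 2) := by
    rw [hammingDist_eq_sum, wt_eq_sum, wt_eq_sum]
    push_cast
    rw [← Finset.sum_add_distrib]
    refine Finset.sum_congr rfl fun j _ => ?_
    cases hx : x j <;> cases hy : y j <;> simp <;> decide
  simpa using (ZMod.natCast_eq_natCast_iff' _ _ _).mp this

def lift (x : Fin m → Bool) : Fin (m + 1) → Bool :=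
  Fin.snoc x (decide (wt x % 2 = 1))

lemma lift_dist_even (x y : Fin m → Bool) :
    hammingDist (lift x) (lift y) % 2 = 0 := by
  rw [lift, lift, hammingDist_snoc]
  have h := parity_key x y
  rcases Nat.mod_two_eq_zero_or_one (wt x) with h1 | h1 <;>
    rcases Nat.mod_two_eq_zero_or_one (wt y) with h2 | h2 <;>
      simp [h1, h2] <;> omega

lemma lift_dist_le (x y : Fin m → Bool) :
    hammingDist (lift x) (lift y) ≤ hammingDist x y + 1 := by
  rw [lift, lift, hammingDist_snoc]
  split <;> omega

lemma lift_dist_ge (x y : Fin m → Bool) :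
    hammingDist x y ≤ hammingDist (lift x) (lift y) := by
  rw [lift, lift, hammingDist_snoc]; omega

def mon (S : Finset (Fin m)) : (Fin m → Bool) → ℝ :=
  fun y => ∏ j ∈ S, (if y j then (1:ℝ) else 0)

def M (m k : ℕ) : Submodule ℝ ((Fin m → Bool) → ℝ) :=
  Submodule.span ℝ {g | ∃ S : Finset (Fin m), S.card ≤ k ∧ mon S = g}

lemma mon_mem (S : Finset (Fin m)) {k : ℕ} (h : S.card ≤ k) : mon S ∈ M m k :=
  Submodule.subset_span ⟨S, h, rfl⟩

lemma mon_mul (S T : Finset (Fin m)) : mon S * mon T = mon (S ∪ T) := by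
  funext y
  show (∏ j ∈ S, (if y j then (1:ℝ) else 0)) * (∏ j ∈ T, (if y j then (1:ℝ) else 0))
      = ∏ j ∈ S ∪ T, (if y j then (1:ℝ) else 0)
  by_cases h : ∃ j ∈ S ∩ T, (if y j then (1:ℝ) else 0) = 0
  · obtain ⟨j, hj, hj0⟩ := h
    rw [Finset.mem_inter] at hj
    rw [Finset.prod_eq_zero hj.1 hj0, Finset.prod_eq_zero (Finset.mem_union_left _ hj.1) hj0,
      zero_mul]
  · push_neg at h
    have h1 : (∏ j ∈ S ∩ T, (if y j then (1:ℝ) else 0)) = 1 := by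
      refine Finset.prod_eq_one fun j hj => ?_
      have := h j hj
      split at this <;> simp_all
    calc (∏ j ∈ S, (if y j then (1:ℝ) else 0)) * (∏ j ∈ T, (if y j then (1:ℝ) else 0))
        = (∏ j ∈ S ∪ T, (if y j then (1:ℝ) else 0))
          * (∏ j ∈ S ∩ T, (if y j then (1:ℝ) else 0)) :=
          (Finset.prod_union_inter).symm
      _ = _ := by rw [h1, mul_one]

lemma M_mul {f g : (Fin m → Bool) → ℝ} {k : ℕ} (hf : f ∈ M m 1) (hg : g ∈ M m k) :
    f * g ∈ M m (k + 1) := by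
  have hmem : f * g ∈ M m 1 * M m k := Submodule.mul_mem_mul hf hg
  have hle : M m 1 * M m k ≤ M m (k + 1) := by
    rw [M, M, Submodule.span_mul_span]
    rw [Submodule.span_le]
    rintro x ⟨a, ⟨S, hS, rfl⟩, b, ⟨T, hT, rfl⟩, rfl⟩
    apply Submodule.subset_span
    exact ⟨S ∪ T, le_trans (Finset.card_union_le _ _) (by omega), (mon_mul S T).symm⟩
  exact hle hmem

lemma one_mem_M (k : ℕ) : (1 : (Fin m → Bool) → ℝ) ∈ M m k := by
  have : mon (∅ : Finset (Fin m)) = 1 := by funext y; simp [mon]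
  exact this ▸ mon_mem ∅ (by simp)

lemma prod_mem_M {ι : Type*} (s : Finset ι) (f : ι → (Fin m → Bool) → ℝ)
    (hf : ∀ i ∈ s, f i ∈ M m 1) : (∏ i ∈ s, f i) ∈ M m s.card := by
  induction s using Finset.cons_induction with
  | empty => simpa using one_mem_M 0
  | cons a s ha ih =>
    rw [Finset.prod_cons, Finset.card_cons]
    exact M_mul (hf a (Finset.mem_cons_self a s))
      (ih fun i hi => hf i (Finset.mem_cons_of_mem hi))

lemma dist_fun_mem (z : Fin m → Bool) (c : ℝ) :
    (fun y : Fin m → Bool => c - (hammingDist z y : ℝ)) ∈ M m 1 := by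
  have hmon : ∀ j : Fin m, mon {j} ∈ M m 1 := fun j => mon_mem {j} (by simp)
  have h1 : (1 : (Fin m → Bool) → ℝ) ∈ M m 1 := one_mem_M 1
  have key : (fun y : Fin m → Bool => c - (hammingDist z y : ℝ))
      = c • (1 : (Fin m → Bool) → ℝ)
        - ∑ j : Fin m, (if z j then 1 - mon {j} else mon {j}) := by
    funext y
    have : (hammingDist z y : ℝ) = ∑ j : Fin m, (if z j ≠ y j then (1:ℝ) else 0) := by
      rw [hammingDist_eq_sum]
      push_cast
      rfl
    simp only [Pi.sub_apply, Pi.smul_apply, Pi.one_apply, smul_eq_mul, mul_one,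
      Finset.sum_apply, this]
    congr 1
    refine Finset.sum_congr rfl fun j _ => ?_
    cases hz : z j <;> cases hy : y j <;> simp [hz, hy, mon]
  rw [key]
  refine Submodule.sub_mem _ (Submodule.smul_mem _ _ h1) (Submodule.sum_mem _ fun j _ => ?_)
  split
  · exact Submodule.sub_mem _ h1 (hmon j)
  · exact hmon j

noncomputable def Gfin (m k : ℕ) : Finset ((Fin m → Bool) → ℝ) :=
  ((univ : Finset (Finset (Fin m))).filter fun S => S.card ≤ k).image mon

lemma M_eq_span_Gfin (m k : ℕ) : M m k = Submodule.span ℝ (Gfin m k : Set _) := by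
  unfold M Gfin
  have : {g | ∃ S : Finset (Fin m), S.card ≤ k ∧ mon S = g}
      = ((((univ : Finset (Finset (Fin m))).filter fun S => S.card ≤ k).image mon :
          Finset _) : Set _) := by
    ext g
    simp only [Set.mem_setOf_eq, coe_image, Set.mem_image, mem_coe, mem_filter, mem_univ, true_and]
  rw [this]

lemma card_Gfin_le (m k : ℕ) :
    (Gfin m k).card ≤ ∑ i ∈ range (k + 1), m.choose i := by
  refine le_trans Finset.card_image_le ?_
  have hset : ((univ : Finset (Finset (Fin m))).filter fun S => S.card ≤ k)
      = (range (k + 1)).biUnion fun i => Finset.powersetCard i univ := by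
    ext S
    simp [Finset.mem_powersetCard_univ, Nat.lt_succ_iff]
  rw [hset, Finset.card_biUnion]
  · apply le_of_eq
    refine Finset.sum_congr rfl fun i _ => ?_
    rw [Finset.card_powersetCard, Finset.card_univ, Fintype.card_fin]
  · intro a _ b _ hab
    simp only [Finset.disjoint_left, Finset.mem_powersetCard_univ]
    rintro S h1 h2
    exact hab (h1 ▸ h2)

lemma sum_pascal (n D : ℕ) :
    ∑ i ∈ range (D + 1), (n + 1).choose i
      = n.choose D + 2 * ∑ i ∈ range D, n.choose i := by
  have h1 : ∑ i ∈ range (D + 1), (n + 1).choose i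
      = (∑ i ∈ range D, (n + 1).choose (i + 1)) + (n + 1).choose 0 :=
    Finset.sum_range_succ' _ _
  have h2 : ∑ i ∈ range D, (n + 1).choose (i + 1)
      = (∑ i ∈ range D, n.choose i) + ∑ i ∈ range D, n.choose (i + 1) := by
    rw [← Finset.sum_add_distrib]
    exact Finset.sum_congr rfl fun i _ => Nat.choose_succ_succ _ _
  have h3 : (∑ i ∈ range D, n.choose (i + 1)) + n.choose 0
      = ∑ i ∈ range (D + 1), n.choose i := (Finset.sum_range_succ' _ _).symm
  have h4 : ∑ i ∈ range (D + 1), n.choose i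
      = (∑ i ∈ range D, n.choose i) + n.choose D := Finset.sum_range_succ _ _
  simp only [Nat.choose_zero_right] at *
  omega

/-- the evaluation polynomial -/
noncomputable def poly (s t : ℕ) (z : Fin m → Bool) : (Fin m → Bool) → ℝ :=
  fun y => ∏ i ∈ Finset.Icc (s + 1) t, ((2 * i : ℝ) - (hammingDist z y : ℝ))

lemma poly_mem (s t : ℕ) (hst : s < t) (z : Fin m → Bool) :
    poly s t z ∈ M m (t - s) := by
  have hfn : poly s t z
      = ∏ i ∈ Finset.Icc (s + 1) t,
          (fun y : Fin m → Bool => ((2 * i : ℝ) - (hammingDist z y : ℝ))) := by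
    funext y
    simp [poly, Finset.prod_apply]
  have hcard : (Finset.Icc (s + 1) t).card = t - s := by
    rw [Nat.card_Icc]; omega
  rw [hfn, ← hcard]
  exact prod_mem_M _ _ fun i _ => dist_fun_mem z ((2 * i : ℝ))

lemma poly_self_ne (s t : ℕ) (z : Fin m → Bool) :
    poly s t z z ≠ 0 := by
  rw [poly]
  refine Finset.prod_ne_zero_iff.mpr fun i hi => ?_
  rw [Finset.mem_Icc] at hi
  rw [hammingDist_self]
  have : (0:ℝ) < 2 * i := by
    have : (1:ℝ) ≤ (i:ℝ) := by exact_mod_cast Nat.one_le_iff_ne_zero.mpr (by omega)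
    linarith
  push_cast
  simp only [Nat.cast_zero, sub_zero]
  linarith

lemma poly_vanish (s t : ℕ) {z w : Fin m → Bool}
    (h : ∃ i ∈ Finset.Icc (s + 1) t, hammingDist z w = 2 * i) :
    poly s t z w = 0 := by
  obtain ⟨i, hi, hd⟩ := h
  rw [poly]
  refine Finset.prod_eq_zero hi ?_
  rw [hd]
  push_cast
  ring

end Kleitman

theorem kleitman_block_distances (s t n : ℕ) (hst : s < t)
    (F : Finset (Fin n → Bool))
    (hF : ∀ x ∈ F, ∀ y ∈ F, x ≠ y →
      hammingDist x y ∈ Finset.Icc (2 * s + 1) (2 * t)) :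
    F.card ≤ n.choose (t - s) + 2 * ∑ i ∈ Finset.range (t - s), n.choose i := by
  classical
  have hdist : ∀ x ∈ F, ∀ y ∈ F, x ≠ y →
      ∃ i ∈ Finset.Icc (s + 1) t,
        hammingDist (Kleitman.lift x) (Kleitman.lift y) = 2 * i := by
    intro x hx y hy hxy
    have hb := hF x hx y hy hxy
    rw [Finset.mem_Icc] at hb
    have h1 := Kleitman.lift_dist_ge x y
    have h2 := Kleitman.lift_dist_le x y
    have h3 := Kleitman.lift_dist_even x y
    refine ⟨hammingDist (Kleitman.lift x) (Kleitman.lift y) / 2, ?_, ?_⟩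
    · rw [Finset.mem_Icc]; omega
    · omega
  have hli : LinearIndependent ℝ
      (fun x : {x // x ∈ F} => Kleitman.poly s t (Kleitman.lift x.1)) := by
    rw [linearIndependent_iff']
    intro u g hsum i hi
    have hev := congrFun hsum (Kleitman.lift i.1)
    simp only [Finset.sum_apply, Pi.smul_apply, smul_eq_mul, Pi.zero_apply] at hev
    rw [Finset.sum_eq_single i] at hev
    · rcases mul_eq_zero.mp hev with h | h
      · exact h
      · exact absurd h (Kleitman.poly_self_ne s t (Kleitman.lift i.1))
    · intro j _ hji
      have hne : (j : Fin n → Bool) ≠ i := fun h => hji (Subtype.ext h)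
      rw [Kleitman.poly_vanish s t (hdist j j.2 i i.2 hne), mul_zero]
    · intro h
      exact absurd hi h
  have hrange : Set.range (fun x : {x // x ∈ F} => Kleitman.poly s t (Kleitman.lift x.1))
      ≤ SetLike.coe (Submodule.span ℝ
          ((Kleitman.Gfin (n + 1) (t - s) : Finset _) : Set _)) := by
    rintro _ ⟨x, rfl⟩
    rw [← Kleitman.M_eq_span_Gfin]
    exact Kleitman.poly_mem s t hst (Kleitman.lift x.1)
  have hcard := linearIndependent_le_span' _ hli _ hrange
  have hcard2 : F.card ≤ (Kleitman.Gfin (n + 1) (t - s)).card := by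
    simpa only [Cardinal.mk_coe_finset, Finset.coe_sort_coe, Fintype.card_coe,
      Nat.cast_le] using hcard
  calc F.card ≤ (Kleitman.Gfin (n + 1) (t - s)).card := hcard2
    _ ≤ ∑ i ∈ Finset.range (t - s + 1), (n + 1).choose i := Kleitman.card_Gfin_le _ _
    _ = n.choose (t - s) + 2 * ∑ i ∈ Finset.range (t - s), n.choose i :=
        Kleitman.sum_pascal n (t - s)
end

section
/- Let i > j ≥ 1 be integers and let F be a collection of i-element subsets of [n] such that every two distinct members of F intersect in exactly j elements. Then |F| ≤ 1 + (C(i,j) - 1)(i-j) + (n-i)/(i-j); in particular |F| ≤ (1+o(1)) n/(i-j) as n → ∞ with i, j fixed. -/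
/-!
Fix `A ∈ F` and sort the other members `B` by their trace `B ∩ A`, a `j`-subset of `A`.
Members with the same trace `S` pairwise meet exactly in `S`, so they form a sunflower whose
petals `B \ A` are disjoint `(i - j)`-sets outside `A`: each trace class has at most
`(n - i) / (i - j)` members. If one class has more than `i - j` members, every member of
another class would have to meet all of its petals inside its own `i - j` points outside `A`,
so all other classes are empty. Either way
`|F| ≤ 1 + (n - i) / (i - j) + (C(i, j) - 1) (i - j)`.
-/

open Finset

theorem Nat.succ_le_choose_of_lt {i j : ℕ} (h : j < i) : j + 1 ≤ i.choose j :=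
  calc j + 1 = (j + 1).choose j := (Nat.choose_succ_self_right j).symm
    _ ≤ i.choose j := Nat.choose_le_choose j h

theorem Finset.exists_sum_le_add_card_sub_one_mul {ι : Type*} [DecidableEq ι] {T : Finset ι}
    (hT : T.Nonempty) {f : ι → ℕ} {d : ℕ}
    (hf : ∀ s ∈ T, d < f s → ∀ t ∈ T, t ≠ s → f t = 0) :
    ∃ s ∈ T, ∑ t ∈ T, f t ≤ f s + (#T - 1) * d := by
  by_cases hbig : ∃ s ∈ T, d < f s
  · obtain ⟨s, hs, hds⟩ := hbig
    refine ⟨s, hs, ?_⟩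
    rw [← add_sum_erase T f hs,
      sum_eq_zero fun t ht => hf s hs hds t (mem_of_mem_erase ht) (ne_of_mem_erase ht)]
    omega
  · simp only [not_exists, not_and, not_lt] at hbig
    obtain ⟨s, hs⟩ := hT
    refine ⟨s, hs, ?_⟩
    rw [← add_sum_erase T f hs, ← card_erase_of_mem hs, ← smul_eq_mul]
    exact Nat.add_le_add_left (sum_le_card_nsmul _ _ _ fun t ht => hbig t (mem_of_mem_erase ht)) _

section TraceFiber

variable {α : Type*} [DecidableEq α] {F : Finset (Finset α)} {A B C S S' : Finset α} {i j : ℕ}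

def traceFiber (F : Finset (Finset α)) (A S : Finset α) : Finset (Finset α) :=
  {B ∈ F.erase A | B ∩ A = S}

theorem mem_traceFiber : B ∈ traceFiber F A S ↔ B ∈ F ∧ B ≠ A ∧ B ∩ A = S := by
  simp only [traceFiber, mem_filter, mem_erase, and_assoc, and_left_comm (a := B ≠ A)]

theorem card_eq_one_add_sum_card_traceFiber (hA : A ∈ F)
    (hint : (F : Set (Finset α)).Pairwise fun B C => #(B ∩ C) = j) :
    #F = 1 + ∑ S ∈ A.powersetCard j, #(traceFiber F A S) := by
  have htrace : ∀ B ∈ F.erase A, B ∩ A ∈ A.powersetCard j := fun B hB =>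
    mem_powersetCard.2 ⟨inter_subset_right, hint (mem_of_mem_erase hB) hA (ne_of_mem_erase hB)⟩
  rw [← card_erase_add_one hA, card_eq_sum_card_fiberwise htrace, add_comm]
  rfl

theorem card_eq_of_mem_traceFiber (hA : A ∈ F)
    (hint : (F : Set (Finset α)).Pairwise fun B C => #(B ∩ C) = j)
    (hB : B ∈ traceFiber F A S) : #S = j := by
  obtain ⟨hBF, hBA, rfl⟩ := mem_traceFiber.1 hB
  exact hint hBF hA hBA

theorem inter_eq_of_mem_traceFiber (hA : A ∈ F)
    (hint : (F : Set (Finset α)).Pairwise fun B C => #(B ∩ C) = j)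
    (hB : B ∈ traceFiber F A S) (hC : C ∈ traceFiber F A S) (hBC : B ≠ C) : B ∩ C = S := by
  obtain ⟨hBF, -, hBS⟩ := mem_traceFiber.1 hB
  obtain ⟨hCF, -, hCS⟩ := mem_traceFiber.1 hC
  have hSBC : S ⊆ B ∩ C :=
    subset_inter (hBS ▸ inter_subset_left) (hCS ▸ inter_subset_left)
  refine (eq_of_subset_of_card_le hSBC ?_).symm
  rw [hint hBF hCF hBC, card_eq_of_mem_traceFiber hA hint hB]

theorem pairwiseDisjoint_sdiff_traceFiber (hA : A ∈ F)
    (hint : (F : Set (Finset α)).Pairwise fun B C => #(B ∩ C) = j) :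
    (traceFiber F A S : Set (Finset α)).PairwiseDisjoint (· \ A) := by
  intro B hB C hC hBC
  rw [Function.onFun, disjoint_left]
  intro x hxB hxC
  have hx : x ∈ B ∩ C := mem_inter.2 ⟨(mem_sdiff.1 hxB).1, (mem_sdiff.1 hxC).1⟩
  rw [inter_eq_of_mem_traceFiber hA hint hB hC hBC, ← (mem_traceFiber.1 hB).2.2] at hx
  exact (mem_sdiff.1 hxB).2 (mem_inter.1 hx).2

theorem card_sdiff_of_mem_traceFiber (hA : A ∈ F) (hsized : (F : Set (Finset α)).Sized i)
    (hint : (F : Set (Finset α)).Pairwise fun B C => #(B ∩ C) = j)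
    (hB : B ∈ traceFiber F A S) : #(B \ A) = i - j := by
  have hBF := (mem_traceFiber.1 hB).1
  have := card_sdiff_add_card_inter B A
  rw [(mem_traceFiber.1 hB).2.2, card_eq_of_mem_traceFiber hA hint hB, hsized hBF] at this
  omega

theorem card_traceFiber_mul_le [Fintype α] (hA : A ∈ F) (hsized : (F : Set (Finset α)).Sized i)
    (hint : (F : Set (Finset α)).Pairwise fun B C => #(B ∩ C) = j) :
    #(traceFiber F A S) * (i - j) ≤ Fintype.card α - i := by
  calc #(traceFiber F A S) * (i - j) = ∑ B ∈ traceFiber F A S, #(B \ A) := by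
        rw [sum_congr rfl fun B hB => card_sdiff_of_mem_traceFiber hA hsized hint hB,
          sum_const, smul_eq_mul]
    _ = #((traceFiber F A S).biUnion (· \ A)) :=
        (card_biUnion (pairwiseDisjoint_sdiff_traceFiber hA hint)).symm
    _ ≤ #Aᶜ := card_le_card fun x hx => by
        obtain ⟨B, -, hxB⟩ := mem_biUnion.1 hx
        exact mem_compl.2 (mem_sdiff.1 hxB).2
    _ = Fintype.card α - i := by rw [card_compl, hsized hA]

theorem inter_sdiff_nonempty_of_mem_traceFiber (hA : A ∈ F)
    (hint : (F : Set (Finset α)).Pairwise fun B C => #(B ∩ C) = j)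
    (hB : B ∈ traceFiber F A S) (hC : C ∈ traceFiber F A S') (hSS' : S ≠ S') :
    (C ∩ (B \ A)).Nonempty := by
  obtain ⟨hBF, -, hBS⟩ := mem_traceFiber.1 hB
  obtain ⟨hCF, -, hCS⟩ := mem_traceFiber.1 hC
  by_contra hempty
  have hCBA : C ∩ B ⊆ A := fun x hx => by
    by_contra hxA
    exact hempty ⟨x, mem_inter.2 ⟨(mem_inter.1 hx).1, mem_sdiff.2 ⟨(mem_inter.1 hx).2, hxA⟩⟩⟩
  have hCB : C ≠ B := by
    rintro rfl
    exact hSS' (hBS.symm.trans hCS)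
  -- `C ∩ B` has `j` elements and lies in both traces, which also have `j` elements.
  have hS : C ∩ B = S := eq_of_subset_of_card_le
    (hBS ▸ subset_inter (inter_subset_right) hCBA)
    (by rw [hint hCF hBF hCB, card_eq_of_mem_traceFiber hA hint hB])
  have hS' : C ∩ B = S' := eq_of_subset_of_card_le
    (hCS ▸ subset_inter (inter_subset_left) hCBA)
    (by rw [hint hCF hBF hCB, card_eq_of_mem_traceFiber hA hint hC])
  exact hSS' (hS.symm.trans hS')

theorem traceFiber_eq_empty_of_lt_card (hA : A ∈ F) (hsized : (F : Set (Finset α)).Sized i)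
    (hint : (F : Set (Finset α)).Pairwise fun B C => #(B ∩ C) = j) (hSS' : S ≠ S')
    (hlt : i - j < #(traceFiber F A S)) : traceFiber F A S' = ∅ := by
  by_contra hne
  obtain ⟨C, hC⟩ := nonempty_iff_ne_empty.2 hne
  have hdisj : (traceFiber F A S : Set (Finset α)).PairwiseDisjoint fun B => C ∩ (B \ A) :=
    (pairwiseDisjoint_sdiff_traceFiber hA hint).mono fun _ => inter_subset_right
  have hle := card_le_card_biUnion hdisj fun B hB =>
    inter_sdiff_nonempty_of_mem_traceFiber hA hint hB hC hSS'
  have hsub : (traceFiber F A S).biUnion (fun B => C ∩ (B \ A)) ⊆ C \ A := fun x hx => by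
    obtain ⟨B, -, hxB⟩ := mem_biUnion.1 hx
    exact mem_sdiff.2 ⟨(mem_inter.1 hxB).1, (mem_sdiff.1 (mem_inter.1 hxB).2).2⟩
  have := (card_le_card hsub).trans_eq (card_sdiff_of_mem_traceFiber hA hsized hint hC)
  omega

theorem exists_traceFiber_card_le [Fintype α] (hji : j ≤ i) (hA : A ∈ F)
    (hsized : (F : Set (Finset α)).Sized i)
    (hint : (F : Set (Finset α)).Pairwise fun B C => #(B ∩ C) = j) :
    ∃ S, #F ≤ 1 + #(traceFiber F A S) + (i.choose j - 1) * (i - j) ∧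
      #(traceFiber F A S) * (i - j) ≤ Fintype.card α - i := by
  obtain ⟨S, -, hsum⟩ := exists_sum_le_add_card_sub_one_mul (T := A.powersetCard j)
    (powersetCard_nonempty.2 (hsized hA ▸ hji)) (d := i - j)
    (f := fun S => #(traceFiber F A S)) fun S _ hlt S' _ hS'S => by
      simp only [traceFiber_eq_empty_of_lt_card hA hsized hint hS'S.symm hlt, card_empty]
  rw [card_powersetCard, hsized hA] at hsum
  refine ⟨S, ?_, card_traceFiber_mul_le hA hsized hint⟩
  rw [card_eq_one_add_sum_card_traceFiber hA hint]
  omega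

end TraceFiber

theorem one_add_choose_sub_one_mul_add_div_nonneg {i j : ℕ} (hij : j < i) (n : ℕ) :
    0 ≤ 1 + ((i.choose j : ℝ) - 1) * ((i : ℝ) - j) + ((n : ℝ) - i) / ((i : ℝ) - j) := by
  have hd : (1 : ℝ) ≤ i - j := by
    have : (j : ℝ) + 1 ≤ i := by exact_mod_cast hij
    linarith
  have hC : (j : ℝ) + 1 ≤ i.choose j := by exact_mod_cast Nat.succ_le_choose_of_lt hij
  rw [add_div' _ _ _ (by linarith)]
  apply div_nonneg _ (by linarith)
  -- the numerator is at least `(i - j) + j + (n - i) = n`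
  have hjC : (j : ℝ) * ((i - j) * (i - j)) ≤ (i.choose j - 1) * ((i - j) * (i - j)) :=
    mul_le_mul_of_nonneg_right (by linarith) (by positivity)
  have hj : (0 : ℝ) ≤ j * ((i - j) * (i - j) - 1) := mul_nonneg j.cast_nonneg (by nlinarith)
  nlinarith [(n.cast_nonneg : (0 : ℝ) ≤ n)]

theorem restricted_intersection_bound_general (i j n : ℕ) (hij : j < i)
    (F : Finset (Finset (Fin n)))
    (hcard : ∀ A ∈ F, A.card = i)
    (hint : ∀ A ∈ F, ∀ B ∈ F, A ≠ B → (A ∩ B).card = j) :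
    (F.card : ℝ) ≤ 1 + ((i.choose j : ℝ) - 1) * ((i : ℝ) - j)
      + ((n : ℝ) - i) / ((i : ℝ) - j) := by
  rcases F.eq_empty_or_nonempty with rfl | ⟨A, hA⟩
  · simpa using one_add_choose_sub_one_mul_add_div_nonneg hij n
  obtain ⟨S, hF, hfiber⟩ := exists_traceFiber_card_le hij.le hA (fun A hA => hcard A hA)
    (fun A hA B hB hAB => hint A hA B hB hAB)
  rw [Fintype.card_fin] at hfiber
  have hin : i ≤ n := by simpa [hcard A hA] using card_le_univ A
  have hd : (0 : ℝ) < i - j := sub_pos.2 (by exact_mod_cast hij)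
  have hfiberR : (#(traceFiber F A S) : ℝ) ≤ (n - i) / (i - j) := by
    have := (Nat.cast_le (α := ℝ)).2 hfiber
    push_cast [Nat.cast_sub hij.le, Nat.cast_sub hin] at this
    rwa [le_div_iff₀ hd]
  have hFR := (Nat.cast_le (α := ℝ)).2 hF
  push_cast [Nat.cast_sub hij.le, Nat.cast_sub (Nat.choose_pos hij.le)] at hFR
  linarith

theorem restricted_intersection_bound (i j n : ℕ) (hj : 1 ≤ j) (hij : j < i)
    (F : Finset (Finset (Fin n)))
    (hcard : ∀ A ∈ F, A.card = i)
    (hint : ∀ A ∈ F, ∀ B ∈ F, A ≠ B → (A ∩ B).card = j) :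
    (F.card : ℝ) ≤ 1 + ((i.choose j : ℝ) - 1) * ((i : ℝ) - j)
      + ((n : ℝ) - i) / ((i : ℝ) - j) :=
  restricted_intersection_bound_general i j n hij F hcard hint
end

section
/- Let k ≥ 1 and n ≥ 2^k be integers, and let F be a family of vectors in {0,1}^n such that the Hamming distance between any two distinct vectors of F is not divisible by 2^k. Then |F| ≤ 2 Σ_{i=0}^{2^{k-1}-1} C(n,i). -/
open Finset

lemma choose_two_pow_zmod (j : ℕ) : ∀ d : ℕ, ((d.choose (2^j) : ZMod 2)) = if d.testBit j then 1 else 0 := by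
  induction j with
  | zero =>
    intro d
    rw [pow_zero, Nat.choose_one_right, ← ZMod.natCast_mod d 2]
    rcases Nat.mod_two_eq_zero_or_one d with h | h <;>
      simp [Nat.testBit_zero, h, Nat.mod_two_eq_one_iff_testBit_zero]
  | succ j ih =>
    intro d
    have hl := @Choose.choose_modEq_choose_mod_mul_choose_div d (2^(j+1)) 2 ⟨Nat.prime_two⟩
    have h1 : ((d.choose (2^(j+1)) : ℤ) : ZMod 2) = (((d % 2).choose (2^(j+1) % 2) * ((d / 2).choose (2^(j+1) / 2)) : ℤ) : ZMod 2) := by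
      exact_mod_cast (ZMod.intCast_eq_intCast_iff _ _ _).mpr hl
    have h2 : 2^(j+1) % 2 = 0 := by simp [pow_succ, Nat.mul_mod_left]
    have h3 : 2^(j+1) / 2 = 2^j := by rw [pow_succ]; exact Nat.mul_div_cancel _ (by norm_num)
    rw [h2, h3] at h1
    push_cast at h1
    rw [h1, Nat.choose_zero_right, Nat.cast_one, one_mul, ih (d / 2), Nat.testBit_succ]

variable {n : ℕ}

def XRep (n d : ℕ) (f : (Fin n → ZMod 2) → ZMod 2) : Prop :=
  ∃ c : Finset (Fin n) → ZMod 2, ∀ z,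
    f z = ∑ A ∈ (univ : Finset (Fin n)).powerset.filter (fun A => A.card ≤ d), c A * ∏ i ∈ A, z i

lemma zmod2_mul_self (a : ZMod 2) : a * a = a := by revert a; decide

lemma prod_sq (z : Fin n → ZMod 2) (s : Finset (Fin n)) :
    (∏ i ∈ s, z i) * (∏ i ∈ s, z i) = ∏ i ∈ s, z i := by
  rw [← Finset.prod_mul_distrib]
  exact Finset.prod_congr rfl fun i _ => zmod2_mul_self _

lemma prod_union_idem (z : Fin n → ZMod 2) (A B : Finset (Fin n)) :
    (∏ i ∈ A, z i) * (∏ i ∈ B, z i) = ∏ i ∈ A ∪ B, z i := by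
  rw [← Finset.prod_union_inter]
  have h : A ∩ B ⊆ A ∪ B := (Finset.inter_subset_left).trans Finset.subset_union_left
  calc (∏ i ∈ A ∪ B, z i) * ∏ i ∈ A ∩ B, z i
      = ((∏ i ∈ (A ∪ B) \ (A ∩ B), z i) * ∏ i ∈ A ∩ B, z i) * ∏ i ∈ A ∩ B, z i := by
        rw [Finset.prod_sdiff h]
    _ = (∏ i ∈ (A ∪ B) \ (A ∩ B), z i) * ((∏ i ∈ A ∩ B, z i) * ∏ i ∈ A ∩ B, z i) := by ring
    _ = (∏ i ∈ (A ∪ B) \ (A ∩ B), z i) * ∏ i ∈ A ∩ B, z i := by rw [prod_sq]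
    _ = ∏ i ∈ A ∪ B, z i := Finset.prod_sdiff h

lemma rep_monotone {d d' : ℕ} {f} (h : d ≤ d') (hf : XRep n d f) : XRep n d' f := by
  obtain ⟨c, hc⟩ := hf
  refine ⟨fun A => if A.card ≤ d then c A else 0, fun z => ?_⟩
  rw [hc z]
  have hsub : (univ : Finset (Fin n)).powerset.filter (fun A => A.card ≤ d) ⊆
      (univ : Finset (Fin n)).powerset.filter (fun A => A.card ≤ d') := by
    intro A hA; simp only [Finset.mem_filter] at *; exact ⟨hA.1, hA.2.trans h⟩
  rw [← Finset.sum_subset hsub ?_]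
  · refine Finset.sum_congr rfl fun A hA => ?_
    simp only [Finset.mem_filter] at hA
    simp [hA.2]
  · intro A hA hA'
    have : ¬ A.card ≤ d := by
      simp only [Finset.mem_filter] at hA hA'
      exact fun hcard => hA' ⟨hA.1, hcard⟩
    simp [this]

lemma rep_monomial {d : ℕ} {B : Finset (Fin n)} (hB : B.card ≤ d) :
    XRep n d (fun z => ∏ i ∈ B, z i) := by
  refine ⟨fun A => if A = B then 1 else 0, fun z => ?_⟩
  have hBmem : B ∈ (univ : Finset (Fin n)).powerset.filter (fun A => A.card ≤ d) := by
    simp [hB]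
  have : ∑ A ∈ (univ : Finset (Fin n)).powerset.filter (fun A => A.card ≤ d),
      (if A = B then (1 : ZMod 2) else 0) * ∏ i ∈ A, z i = ∏ i ∈ B, z i := by
    simp only [ite_mul, one_mul, zero_mul]
    rw [Finset.sum_ite_eq' _ B (fun A => ∏ i ∈ A, z i), if_pos hBmem]
  exact this.symm

lemma rep_zero {d : ℕ} : XRep n d (fun _ => 0) :=
  ⟨fun _ => 0, fun z => by simp⟩

lemma rep_add {d : ℕ} {f g} (hf : XRep n d f) (hg : XRep n d g) :
    XRep n d (fun z => f z + g z) := by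
  obtain ⟨c, hc⟩ := hf; obtain ⟨c', hc'⟩ := hg
  refine ⟨fun A => c A + c' A, fun z => ?_⟩
  show f z + g z = _
  rw [hc z, hc' z, ← Finset.sum_add_distrib]
  exact Finset.sum_congr rfl fun A _ => by ring

lemma rep_sum {d : ℕ} {α : Type*} [DecidableEq α] (s : Finset α) (f : α → (Fin n → ZMod 2) → ZMod 2)
    (h : ∀ a ∈ s, XRep n d (f a)) : XRep n d (fun z => ∑ a ∈ s, f a z) := by
  induction s using Finset.induction_on with
  | empty => simpa using (rep_zero : XRep n d _)
  | @insert a s ha ih =>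
    obtain ⟨c, hc⟩ := rep_add (h a (Finset.mem_insert_self a s))
      (ih fun b hb => h b (Finset.mem_insert_of_mem hb))
    refine ⟨c, fun z => ?_⟩
    show ∑ b ∈ insert a s, f b z = _
    rw [Finset.sum_insert ha]
    exact hc z

lemma rep_mul {d e : ℕ} {f g} (hf : XRep n d f) (hg : XRep n e g) :
    XRep n (d + e) (fun z => f z * g z) := by
  classical
  obtain ⟨c, hc⟩ := hf; obtain ⟨c', hc'⟩ := hg
  set 𝒜d := (univ : Finset (Fin n)).powerset.filter (fun A => A.card ≤ d) with h𝒜d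
  set 𝒜e := (univ : Finset (Fin n)).powerset.filter (fun A => A.card ≤ e) with h𝒜e
  set 𝒜 := (univ : Finset (Fin n)).powerset.filter (fun A => A.card ≤ d + e) with h𝒜
  refine ⟨fun C => ∑ A ∈ 𝒜d, ∑ B ∈ 𝒜e, if A ∪ B = C then c A * c' B else 0, fun z => ?_⟩
  have hmem : ∀ A ∈ 𝒜d, ∀ B ∈ 𝒜e, A ∪ B ∈ 𝒜 := by
    intro A hA B hB
    simp only [h𝒜d, h𝒜e, h𝒜, Finset.mem_filter, Finset.mem_powerset] at *
    exact ⟨Finset.subset_univ _, (Finset.card_union_le A B).trans (Nat.add_le_add hA.2 hB.2)⟩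
  calc f z * g z = (∑ A ∈ 𝒜d, c A * ∏ i ∈ A, z i) * (∑ B ∈ 𝒜e, c' B * ∏ i ∈ B, z i) := by
        rw [hc z, hc' z]
    _ = ∑ A ∈ 𝒜d, ∑ B ∈ 𝒜e, (c A * c' B) * ∏ i ∈ A ∪ B, z i := by
        rw [Finset.sum_mul_sum]
        exact Finset.sum_congr rfl fun A _ => Finset.sum_congr rfl fun B _ => by
          rw [← prod_union_idem z A B]; ring
    _ = ∑ A ∈ 𝒜d, ∑ B ∈ 𝒜e, ∑ C ∈ 𝒜, (if A ∪ B = C then (c A * c' B) * ∏ i ∈ C, z i else 0) := by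
        refine Finset.sum_congr rfl fun A hA => Finset.sum_congr rfl fun B hB => ?_
        rw [Finset.sum_ite_eq _ (A ∪ B) (fun C => (c A * c' B) * ∏ i ∈ C, z i),
          if_pos (hmem A hA B hB)]
    _ = ∑ A ∈ 𝒜d, ∑ C ∈ 𝒜, ∑ B ∈ 𝒜e, (if A ∪ B = C then (c A * c' B) * ∏ i ∈ C, z i else 0) :=
        Finset.sum_congr rfl fun A _ => Finset.sum_comm
    _ = ∑ C ∈ 𝒜, ∑ A ∈ 𝒜d, ∑ B ∈ 𝒜e, (if A ∪ B = C then (c A * c' B) * ∏ i ∈ C, z i else 0) :=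
        Finset.sum_comm
    _ = ∑ C ∈ 𝒜, (∑ A ∈ 𝒜d, ∑ B ∈ 𝒜e, if A ∪ B = C then c A * c' B else 0) * ∏ i ∈ C, z i := by
        refine Finset.sum_congr rfl fun C _ => ?_
        rw [Finset.sum_mul]
        refine Finset.sum_congr rfl fun A _ => ?_
        rw [Finset.sum_mul]
        exact Finset.sum_congr rfl fun B _ => by rw [ite_mul, zero_mul]

lemma rep_esymm (m : ℕ) :
    XRep n m (fun z => ∑ S ∈ Finset.powersetCard m (univ : Finset (Fin n)), ∏ i ∈ S, z i) := by
  refine rep_sum _ _ fun S hS => ?_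
  rw [Finset.mem_powersetCard] at hS
  exact rep_monomial hS.2.le

lemma rep_one {d : ℕ} : XRep n d (fun _ => (1 : ZMod 2)) := by
  have := rep_monomial (n := n) (d := d) (B := ∅) (by simp)
  simpa using this

lemma rep_prod (m : ℕ) :
    XRep n (2 ^ m - 1) (fun z => ∏ j ∈ Finset.range m,
      (1 + ∑ S ∈ Finset.powersetCard (2 ^ j) (univ : Finset (Fin n)), ∏ i ∈ S, z i)) := by
  induction m with
  | zero => simpa using (rep_one : XRep n (2 ^ 0 - 1) _)
  | succ m ih =>
    have h1 : XRep n (2 ^ m) (fun z =>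
        (1 : ZMod 2) + ∑ S ∈ Finset.powersetCard (2 ^ m) (univ : Finset (Fin n)), ∏ i ∈ S, z i) :=
      rep_add (rep_one) (rep_esymm (2 ^ m))
    have h2 := rep_mul ih h1
    have he : 2 ^ m - 1 + 2 ^ m = 2 ^ (m + 1) - 1 := by
      have := Nat.one_le_two_pow (n := m); rw [pow_succ]; omega
    rw [he] at h2
    refine h2.imp fun c hc z => ?_
    have := hc z
    simp only at this ⊢
    rw [Finset.prod_range_succ, this]

def bvec {n : ℕ} (x : Fin n → Bool) : Fin n → ZMod 2 := fun i => if x i then 1 else 0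

lemma bool_add_eq (a b : Bool) :
    ((if a then (1 : ZMod 2) else 0) + (if b then 1 else 0)) = if a ≠ b then 1 else 0 := by
  cases a <;> cases b <;> decide

lemma eval_esymm (x y : Fin n → Bool) (m : ℕ) :
    ∑ S ∈ Finset.powersetCard m (univ : Finset (Fin n)),
      ∏ i ∈ S, (bvec x i + bvec y i) =
    ((hammingDist x y).choose m : ZMod 2) := by
  simp only [bvec]
  classical
  set D := (univ : Finset (Fin n)).filter (fun i => x i ≠ y i) with hD
  have hdist : hammingDist x y = D.card := rfl
  have hprod : ∀ S : Finset (Fin n),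
      (∏ i ∈ S, ((if x i then (1 : ZMod 2) else 0) + (if y i then 1 else 0))) =
      if S ⊆ D then 1 else 0 := by
    intro S
    by_cases hS : S ⊆ D
    · rw [if_pos hS]
      refine Finset.prod_eq_one fun i hi => ?_
      have := hS hi
      rw [hD, Finset.mem_filter] at this
      rw [bool_add_eq, if_pos this.2]
    · rw [if_neg hS]
      obtain ⟨i, hiS, hiD⟩ := Finset.not_subset.mp hS
      refine Finset.prod_eq_zero hiS ?_
      have : ¬ x i ≠ y i := by
        intro h; exact hiD (by rw [hD, Finset.mem_filter]; exact ⟨Finset.mem_univ i, h⟩)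
      rw [bool_add_eq, if_neg this]
  rw [Finset.sum_congr rfl fun S _ => hprod S, Finset.sum_boole]
  have hfe : (Finset.powersetCard m (univ : Finset (Fin n))).filter (fun S => S ⊆ D) =
      Finset.powersetCard m D := by
    ext S
    simp only [Finset.mem_filter, Finset.mem_powersetCard]
    constructor
    · rintro ⟨⟨-, hc⟩, hsub⟩; exact ⟨hsub, hc⟩
    · rintro ⟨hsub, hc⟩; exact ⟨⟨Finset.subset_univ _, hc⟩, hsub⟩
  rw [hfe, Finset.card_powersetCard, hdist]

lemma exists_low_bit {k d : ℕ} (h : ¬ 2 ^ k ∣ d) : ∃ j < k, d.testBit j = true := by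
  have hr : d % 2 ^ k ≠ 0 := fun h0 => h (Nat.dvd_iff_mod_eq_zero.mpr h0)
  obtain ⟨j, hj⟩ := Nat.exists_testBit_of_ne_zero hr
  have hjk : j < k := by
    by_contra hge
    rw [Nat.testBit_lt_two_pow (lt_of_lt_of_le (Nat.mod_lt _ (Nat.two_pow_pos _))
      (Nat.pow_le_pow_right (by norm_num) (not_lt.mp hge)))] at hj
    exact Bool.false_ne_true hj
  refine ⟨j, hjk, ?_⟩
  rw [Nat.testBit_mod_two_pow] at hj
  simpa using (Bool.and_eq_true_iff.mp hj).2

lemma diag_eval {k : ℕ} (x y : Fin n → Bool) (hxy : x ≠ y → ¬ (2 ^ k ∣ hammingDist x y)) :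
    ∏ j ∈ Finset.range k, ((1 : ZMod 2) + ∑ S ∈ Finset.powersetCard (2 ^ j) (univ : Finset (Fin n)),
      ∏ i ∈ S, (bvec x i + bvec y i)) =
    if x = y then 1 else 0 := by
  rw [Finset.prod_congr rfl fun j _ => by rw [eval_esymm x y (2 ^ j)]]
  by_cases hxy' : x = y
  · rw [if_pos hxy', hxy']
    refine Finset.prod_eq_one fun j _ => ?_
    rw [hammingDist_self, Nat.choose_eq_zero_of_lt (Nat.two_pow_pos _)]
    simp
  · rw [if_neg hxy']
    obtain ⟨j, hjk, hbit⟩ := exists_low_bit (hxy hxy')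
    refine Finset.prod_eq_zero (Finset.mem_range.mpr hjk) ?_
    rw [choose_two_pow_zmod, if_pos hbit]
    decide

lemma regroup (L D : ℕ) (hLD : D ≤ 2 * L - 1) (hL : 1 ≤ L) (c : Finset (Fin n) → ZMod 2)
    (u v : Fin n → ZMod 2) :
    ∑ B ∈ (univ : Finset (Fin n)).powerset.filter (fun A => A.card ≤ D),
      c B * ∑ T ∈ B.powerset, (∏ i ∈ T, u i) * ∏ i ∈ B \ T, v i
    = (∑ T ∈ (univ : Finset (Fin n)).powerset.filter (fun S => S.card < L),
        (∏ i ∈ T, u i) * ∑ B ∈ (univ : Finset (Fin n)).powerset.filter (fun A => A.card ≤ D),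
          (if T ⊆ B then c B * ∏ i ∈ B \ T, v i else 0))
      + ∑ S ∈ (univ : Finset (Fin n)).powerset.filter (fun S => S.card < L),
        (∑ B ∈ (univ : Finset (Fin n)).powerset.filter (fun A => A.card ≤ D),
          if S ⊆ B ∧ L ≤ (B \ S).card then c B * ∏ i ∈ B \ S, u i else 0) * ∏ i ∈ S, v i := by
  classical
  set 𝒜 := (univ : Finset (Fin n)).powerset.filter (fun A => A.card ≤ D) with h𝒜
  set 𝒯 := (univ : Finset (Fin n)).powerset.filter (fun S => S.card < L) with h𝒯
  have hrhs1 : ∀ T ∈ 𝒯, (∏ i ∈ T, u i) * ∑ B ∈ 𝒜, (if T ⊆ B then c B * ∏ i ∈ B \ T, v i else 0)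
      = ∑ B ∈ 𝒜, (if T ⊆ B then c B * ((∏ i ∈ T, u i) * ∏ i ∈ B \ T, v i) else 0) := by
    intro T _
    rw [Finset.mul_sum]
    exact Finset.sum_congr rfl fun B _ => by rw [mul_ite, mul_zero]; split_ifs <;> ring
  have hrhs2 : ∀ S ∈ 𝒯, (∑ B ∈ 𝒜, if S ⊆ B ∧ L ≤ (B \ S).card then c B * ∏ i ∈ B \ S, u i else 0)
      * ∏ i ∈ S, v i
      = ∑ B ∈ 𝒜, (if S ⊆ B ∧ L ≤ (B \ S).card then c B * ((∏ i ∈ B \ S, u i) * ∏ i ∈ S, v i) else 0) := by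
    intro S _
    rw [Finset.sum_mul]
    exact Finset.sum_congr rfl fun B _ => by rw [ite_mul, zero_mul]; split_ifs <;> ring
  rw [Finset.sum_congr rfl hrhs1, Finset.sum_congr rfl hrhs2, Finset.sum_comm, Finset.sum_comm
    (s := 𝒯), ← Finset.sum_add_distrib]
  refine Finset.sum_congr rfl fun B hB => ?_
  have hBcard : B.card ≤ 2 * L - 1 := by
    rw [h𝒜, Finset.mem_filter] at hB
    exact hB.2.trans hLD
  rw [Finset.mul_sum, ← Finset.sum_filter_add_sum_filter_not B.powerset (fun T => T.card < L)]
  congr 1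
  · -- small-T part
    have hset : B.powerset.filter (fun T => T.card < L) = 𝒯.filter (fun T => T ⊆ B) := by
      ext T
      simp only [h𝒯, Finset.mem_filter, Finset.mem_powerset]
      constructor
      · rintro ⟨h1, h2⟩; exact ⟨⟨Finset.subset_univ _, h2⟩, h1⟩
      · rintro ⟨⟨-, h2⟩, h1⟩; exact ⟨h1, h2⟩
    rw [hset, Finset.sum_filter]
  · -- large-T part, reindex by S = B \ T
    have hset : 𝒯.filter (fun S => S ⊆ B ∧ L ≤ (B \ S).card)
        = B.powerset.filter (fun S => L ≤ (B \ S).card) := by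
      ext S
      simp only [h𝒯, Finset.mem_filter, Finset.mem_powerset]
      constructor
      · rintro ⟨⟨-, -⟩, h2, h3⟩; exact ⟨h2, h3⟩
      · rintro ⟨h2, h3⟩
        have hc1 : (B \ S).card = B.card - S.card := Finset.card_sdiff_of_subset h2
        have hc2 : S.card ≤ B.card := Finset.card_le_card h2
        exact ⟨⟨Finset.subset_univ _, by omega⟩, h2, h3⟩
    rw [← Finset.sum_filter, hset]
    refine (Finset.sum_bij' (fun S _ => B \ S) (fun T _ => B \ T) ?_ ?_ ?_ ?_ ?_).symm
    · intro S hS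
      simp only [Finset.mem_filter, Finset.mem_powerset] at hS ⊢
      exact ⟨Finset.sdiff_subset, not_lt.mpr hS.2⟩
    · intro T hT
      simp only [Finset.mem_filter, Finset.mem_powerset] at hT ⊢
      refine ⟨Finset.sdiff_subset, ?_⟩
      rw [Finset.sdiff_sdiff_eq_self hT.1]
      exact not_lt.mp hT.2
    · intro S hS
      simp only [Finset.mem_filter, Finset.mem_powerset] at hS
      exact Finset.sdiff_sdiff_eq_self hS.1
    · intro T hT
      simp only [Finset.mem_filter, Finset.mem_powerset] at hT
      exact Finset.sdiff_sdiff_eq_self hT.1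
    · intro S hS
      simp only [Finset.mem_filter, Finset.mem_powerset] at hS
      rw [Finset.sdiff_sdiff_eq_self hS.1]

lemma card_small (L : ℕ) :
    ((univ : Finset (Fin n)).powerset.filter (fun S => S.card < L)).card
      = ∑ i ∈ Finset.range L, n.choose i := by
  classical
  have hset : (univ : Finset (Fin n)).powerset.filter (fun S => S.card < L)
      = (Finset.range L).biUnion (fun i => Finset.powersetCard i (univ : Finset (Fin n))) := by
    ext S
    simp only [Finset.mem_filter, Finset.mem_powerset, Finset.mem_biUnion, Finset.mem_range,
      Finset.mem_powersetCard]
    constructor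
    · rintro ⟨h1, h2⟩; exact ⟨S.card, h2, h1, rfl⟩
    · rintro ⟨i, hi, h1, h2⟩; exact ⟨h1, h2 ▸ hi⟩
  rw [hset, Finset.card_biUnion]
  · exact Finset.sum_congr rfl fun i _ => by
      rw [Finset.card_powersetCard, Finset.card_univ, Fintype.card_fin]
  · intro i _ j _ hij
    rw [Function.onFun, Finset.disjoint_left]
    intro S hSi hSj
    rw [Finset.mem_powersetCard] at hSi hSj
    exact hij (hSi.2 ▸ hSj.2 ▸ rfl)

theorem distances_not_divisible_by_pow_two (k n : ℕ) (hk : 1 ≤ k) (hn : 2 ^ k ≤ n)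
    (F : Finset (Fin n → Bool))
    (hF : ∀ x ∈ F, ∀ y ∈ F, x ≠ y → ¬ (2 ^ k ∣ hammingDist x y)) :
    F.card ≤ 2 * ∑ i ∈ Finset.range (2 ^ (k - 1)), n.choose i := by
  classical
  set L := 2 ^ (k - 1) with hLdef
  have hL1 : 1 ≤ L := Nat.one_le_two_pow
  have h2L : 2 ^ k = 2 * L := by
    rw [hLdef, ← pow_succ']
    congr 1
    omega
  obtain ⟨c, hc⟩ := rep_prod (n := n) k
  set D := 2 ^ k - 1 with hDdef
  have hLD : D ≤ 2 * L - 1 := by rw [hDdef, h2L]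
  set 𝒜 := (univ : Finset (Fin n)).powerset.filter (fun A => A.card ≤ D) with h𝒜
  set 𝒯 := (univ : Finset (Fin n)).powerset.filter (fun S => S.card < L) with h𝒯
  have hfact : (1 : Matrix ↥F ↥F (ZMod 2)) = Matrix.of (fun (x : ↥F) (p : ↥𝒯 ⊕ ↥𝒯) => Sum.elim
      (fun T : ↥𝒯 => ∏ i ∈ T.1, bvec x.1 i)
      (fun S : ↥𝒯 => ∑ B ∈ 𝒜, if S.1 ⊆ B ∧ L ≤ (B \ S.1).card then c B * ∏ i ∈ B \ S.1, bvec x.1 i else 0)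
      p) * Matrix.of (fun (p : ↥𝒯 ⊕ ↥𝒯) (y : ↥F) => Sum.elim
      (fun T : ↥𝒯 => ∑ B ∈ 𝒜, if T.1 ⊆ B then c B * ∏ i ∈ B \ T.1, bvec y.1 i else 0)
      (fun S : ↥𝒯 => ∏ i ∈ S.1, bvec y.1 i)
      p) := by
    ext x y
    rw [Matrix.one_apply, Matrix.mul_apply, Fintype.sum_sum_type]
    simp only [Matrix.of_apply, Sum.elim_inl, Sum.elim_inr]
    have e1 := diag_eval (k := k) x.1 y.1 (hF x.1 x.2 y.1 y.2)
    have e2 := hc (fun i => bvec x.1 i + bvec y.1 i)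
    simp only at e2
    have key : (if x.1 = y.1 then (1 : ZMod 2) else 0)
        = ∑ B ∈ 𝒜, c B * ∑ T ∈ B.powerset, (∏ i ∈ T, bvec x.1 i) * ∏ i ∈ B \ T, bvec y.1 i :=
      calc (if x.1 = y.1 then (1 : ZMod 2) else 0)
          = ∏ j ∈ Finset.range k, ((1 : ZMod 2) + ∑ S ∈ Finset.powersetCard (2 ^ j) (univ : Finset (Fin n)),
              ∏ i ∈ S, (bvec x.1 i + bvec y.1 i)) := e1.symm
        _ = ∑ B ∈ 𝒜, c B * ∏ i ∈ B, (bvec x.1 i + bvec y.1 i) := e2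
        _ = ∑ B ∈ 𝒜, c B * ∑ T ∈ B.powerset, (∏ i ∈ T, bvec x.1 i) * ∏ i ∈ B \ T, bvec y.1 i :=
            Finset.sum_congr rfl fun B _ => by rw [Finset.prod_add]
    have hre := regroup (n := n) L D hLD hL1 c (bvec x.1) (bvec y.1)
    rw [← h𝒜, ← h𝒯] at hre
    have hsub1 : ∀ (g : Finset (Fin n) → ZMod 2), ∑ T : ↥𝒯, g ↑T = ∑ T ∈ 𝒯, g T :=
      fun g => Finset.sum_coe_sort 𝒯 g
    rw [show (if x = y then (1 : ZMod 2) else 0) = (if x.1 = y.1 then 1 else 0) by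
      by_cases h : x = y
      · rw [if_pos h, if_pos (congrArg _ h)]
      · rw [if_neg h, if_neg fun h' => h (Subtype.ext h')]]
    rw [key, hre,
      hsub1 (fun T => (∏ i ∈ T, bvec x.1 i) * ∑ B ∈ 𝒜, if T ⊆ B then c B * ∏ i ∈ B \ T, bvec y.1 i else 0),
      hsub1 (fun S => (∑ B ∈ 𝒜, if S ⊆ B ∧ L ≤ (B \ S).card then c B * ∏ i ∈ B \ S, bvec x.1 i else 0) * ∏ i ∈ S, bvec y.1 i)]
  have hrank : F.card ≤ Fintype.card (↥𝒯 ⊕ ↥𝒯) := by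
    calc F.card = Fintype.card ↥F := (Fintype.card_coe F).symm
      _ = (1 : Matrix ↥F ↥F (ZMod 2)).rank := Matrix.rank_one.symm
      _ ≤ Fintype.card (↥𝒯 ⊕ ↥𝒯) := by
          rw [hfact]
          exact (Matrix.rank_mul_le_left _ _).trans (Matrix.rank_le_card_width _)
  rw [Fintype.card_sum, Fintype.card_coe] at hrank
  have hcard : 𝒯.card = ∑ i ∈ Finset.range L, n.choose i := card_small L
  rw [hcard] at hrank
  omega
end
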